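/- arXiv:1206.2208 — 5 statements merged into one kernel-verified Lean document; each statement's English description precedes it below -/
import Mathlib

section
/- For every bounded continuous g : ℝ → ℝ and every x ∈ ℝ one has |h⁻¹(x)| ≤ (1/ν) |x|^ν (x²+1)^((μ−ν)/2) e^(‖g‖_∞), and for x ≠ 0 one has |h⁻¹(x)| ≥ e^(−(μ−1)) |x|^ν (x²+1)^((μ−ν)/2) e^(⨍₀ˣ g) ≥ e^(−(μ−1)) |x|^ν (x²+1)^((μ−ν)/2) e^(−‖g‖_∞), where ⨍₀ˣ g = (1/x)∫₀ˣ g(y) dy denotes the average of g over the interval between 0 and x. -/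
open MeasureTheory Real Filter Set Bornology

/-- `h⁻¹(x) = ∫₀ˣ |y|^(ν−1)(y²+1)^((μ−ν)/2) e^(g(y)) dy`. -/
noncomputable def hInv (μ ν : ℝ) (g : ℝ → ℝ) (x : ℝ) : ℝ :=
  ∫ y in (0:ℝ)..x, |y| ^ (ν - 1) * (y ^ 2 + 1) ^ ((μ - ν) / 2) * Real.exp (g y)

/-- `(h⁻¹)'(x) = |x|^(ν−1)(x²+1)^((μ−ν)/2) e^(g(x))`. -/
noncomputable def hInvDeriv (μ ν : ℝ) (g : ℝ → ℝ) (x : ℝ) : ℝ :=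
  |x| ^ (ν - 1) * (x ^ 2 + 1) ^ ((μ - ν) / 2) * Real.exp (g x)

/-- The constant `κ = κ(g)` determined by `∫_ℝ κ/(x h⁻¹(x) (h⁻¹)'(x)) dx = (μ−ν)π`. -/
noncomputable def kappa (μ ν : ℝ) (g : ℝ → ℝ) : ℝ :=
  (μ - ν) * Real.pi / ∫ x : ℝ, 1 / (x * hInv μ ν g x * hInvDeriv μ ν g x)

/-- `F'(x) = κ/(x h⁻¹(x) (h⁻¹)'(x))`. -/
noncomputable def Fder (μ ν : ℝ) (g : ℝ → ℝ) (x : ℝ) : ℝ :=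
  kappa μ ν g / (x * hInv μ ν g x * hInvDeriv μ ν g x)

/-- `F = F_g`, the antiderivative of `Fder` with `F(+∞) = 0`. -/
noncomputable def Fg (μ ν : ℝ) (g : ℝ → ℝ) (x : ℝ) : ℝ :=
  -∫ y in Set.Ioi x, Fder μ ν g y

/-- `θ(x)`: the continuous branch of `arg (x − i)`, i.e. `arctan(−1/x)` for `x > 0`,
`arctan(−1/x) − π` for `x < 0`, and `−π/2` at `x = 0`. -/
noncomputable def theta (x : ℝ) : ℝ :=
  if x = 0 then -(Real.pi / 2)
  else if x < 0 then Real.arctan (-1 / x) - Real.pi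
  else Real.arctan (-1 / x)

/-- `HasHilbertAt f x v`: the principal value `(1/π) lim_{ε→0⁺} ∫_{|x−y|>ε} f(y)/(x−y) dy`
exists and equals `v`. -/
def HasHilbertAt (f : ℝ → ℝ) (x v : ℝ) : Prop :=
  Filter.Tendsto
    (fun ε : ℝ => (1 / Real.pi) * ∫ y in {y : ℝ | ε < |x - y|}, f y / (x - y))
    (nhdsWithin 0 (Set.Ioi 0)) (nhds v)

/-- `G(x) = g(x) + (1/2)(μ−ν) ln(x²+1)`. -/
noncomputable def Gfun (μ ν : ℝ) (g : ℝ → ℝ) (x : ℝ) : ℝ :=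
  g x + (1 / 2) * (μ - ν) * Real.log (x ^ 2 + 1)

/-- `g` is a solution of system (3.12): `g` is bounded and continuous, the principal
value `T[g](x) = H(F_g − (μ−ν)θ)(x)` exists for every `x`, and `g = T[g]`. -/
def IsSolution (μ ν : ℝ) (g : ℝ → ℝ) : Prop :=
  Continuous g ∧ (∃ M : ℝ, ∀ x, |g x| ≤ M) ∧
    ∀ x : ℝ, HasHilbertAt (fun y => Fg μ ν g y - (μ - ν) * theta y) x (g x)


/-!
By the reflection `y ↦ -y` (which replaces `g` by `g ∘ neg`) it suffices to take `x > 0`.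
The upper bound comes from `(y² + 1)^((μ-ν)/2) e^{g y} ≤ (x² + 1)^((μ-ν)/2) e^M` on `[0, x]`
and `∫₀ˣ y^(ν-1) = x^ν / ν`. For the lower bound, `y^(ν-μ) (y² + 1)^((μ-ν)/2) = (1 + y⁻²)^((μ-ν)/2)`
decreases in `y`, so on `(0, x]` the integrand dominates `x^(ν-μ) (x² + 1)^((μ-ν)/2)` times
`exp ((μ - 1) log y + g y)`. Jensen's inequality for `exp` bounds the integral of the latter below
by `x` times the exponential of its average, and the average of `log y` over `(0, x)` is
`log x - 1`; this is where the factor `e^{-(μ-1)}` comes from.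
-/

open intervalIntegral

lemma mul_exp_average_le_integral_exp {f : ℝ → ℝ} {a b : ℝ} (hab : a < b)
    (hf : IntervalIntegrable f volume a b)
    (hef : IntervalIntegrable (fun x => exp (f x)) volume a b) :
    (b - a) * exp ((b - a)⁻¹ * ∫ x in a..b, f x) ≤ ∫ x in a..b, exp (f x) := by
  set c := (b - a)⁻¹ * ∫ x in a..b, f x
  have hba : b - a ≠ 0 := (sub_pos.2 hab).ne'
  have htangent : IntervalIntegrable (fun x => exp c * (1 + (f x - c))) volume a b :=
    (intervalIntegrable_const.add (hf.sub intervalIntegrable_const)).const_mul _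
  calc (b - a) * exp c = ∫ x in a..b, exp c * (1 + (f x - c)) := by
        rw [intervalIntegral.integral_const_mul, integral_add intervalIntegrable_const
          (hf.sub intervalIntegrable_const), integral_sub hf intervalIntegrable_const]
        simp only [intervalIntegral.integral_const, smul_eq_mul, c]
        field_simp
        ring
    _ ≤ ∫ x in a..b, exp (f x) := integral_mono_on hab.le htangent hef fun x _ => by
        calc exp c * (1 + (f x - c)) ≤ exp c * exp (f x - c) := by
              gcongr; linarith [add_one_le_exp (f x - c)]
          _ = exp (f x) := by rw [← exp_add]; ring_nf

lemma abs_inv_mul_integral_le {g : ℝ → ℝ} {M : ℝ} (hM : ∀ y, |g y| ≤ M) (a b : ℝ) :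
    |(b - a)⁻¹ * ∫ y in a..b, g y| ≤ M := by
  have hI : ‖∫ y in a..b, g y‖ ≤ M * |b - a| :=
    norm_integral_le_of_norm_le_const fun y _ => (Real.norm_eq_abs _).le.trans (hM y)
  rw [Real.norm_eq_abs] at hI
  rw [abs_mul, abs_inv]
  rcases eq_or_ne b a with rfl | hab
  · simpa using (abs_nonneg _).trans (hM b)
  · rw [inv_mul_le_iff₀ (abs_pos.2 (sub_ne_zero.2 hab))]
    linarith

lemma one_div_neg_mul_integral_comp_neg (g : ℝ → ℝ) (x : ℝ) :
    (1 / -x) * ∫ y in 0..-x, g (-y) = (1 / x) * ∫ y in 0..x, g y := by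
  rw [integral_comp_neg, neg_neg, neg_zero, integral_symm, div_neg, neg_mul_neg]

lemma antitoneOn_rpow_neg_two_mul_mul_sq_add_one_rpow {p : ℝ} (hp : 0 ≤ p) :
    AntitoneOn (fun t : ℝ => t ^ (-(2 * p)) * (t ^ 2 + 1) ^ p) (Ioi 0) := by
  have hform : ∀ t : ℝ, 0 < t → t ^ (-(2 * p)) * (t ^ 2 + 1) ^ p = (1 + (t ^ 2)⁻¹) ^ p := by
    intro t ht
    rw [rpow_neg ht.le, rpow_mul ht.le, rpow_two, ← inv_rpow (by positivity),
      ← mul_rpow (by positivity) (by positivity)]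
    congr 1
    field_simp
  rintro s (hs : 0 < s) t (ht : 0 < t) hst
  simp only [hform s hs, hform t ht]
  gcongr

section hInv

variable {μ ν : ℝ} {g : ℝ → ℝ} {x : ℝ}

lemma hInv_eq_integral_rpow (hx : 0 ≤ x) :
    hInv μ ν g x = ∫ y in 0..x, y ^ (ν - 1) * (y ^ 2 + 1) ^ ((μ - ν) / 2) * exp (g y) :=
  integral_congr fun y hy => by
    rw [uIcc_of_le hx] at hy
    simp only [abs_of_nonneg hy.1]

lemma hInv_nonneg (hx : 0 ≤ x) : 0 ≤ hInv μ ν g x :=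
  integral_nonneg hx fun y _ => by positivity

lemma hInv_neg (μ ν : ℝ) (g : ℝ → ℝ) (x : ℝ) :
    hInv μ ν g (-x) = -hInv μ ν (fun y => g (-y)) x := by
  set F := fun z => |z| ^ (ν - 1) * (z ^ 2 + 1) ^ ((μ - ν) / 2) * exp (g z)
  have hF : hInv μ ν g (-x) = ∫ y in 0..-x, F y := rfl
  have hFneg : hInv μ ν (fun y => g (-y)) x = ∫ y in 0..x, F (-y) := by
    simp only [hInv, F, abs_neg, neg_sq]
  rw [hF, hFneg, integral_comp_neg, neg_zero, integral_symm (-x) 0]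

lemma intervalIntegrable_hInv_integrand (hν : 0 < ν) (hg : Continuous g) (a b : ℝ) :
    IntervalIntegrable (fun y => y ^ (ν - 1) * (y ^ 2 + 1) ^ ((μ - ν) / 2) * exp (g y))
      volume a b :=
  ((intervalIntegrable_rpow' (by linarith)).mul_continuousOn
    ((by fun_prop : Continuous fun y : ℝ => y ^ 2 + 1).rpow_const
      fun y => Or.inl (by positivity)).continuousOn).mul_continuousOn hg.rexp.continuousOn

lemma hInv_le_of_nonneg (hν : 0 < ν) (hνμ : ν ≤ μ) (hg : Continuous g) {M : ℝ}
    (hM : ∀ y, g y ≤ M) (hx : 0 ≤ x) :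
    hInv μ ν g x ≤ 1 / ν * x ^ ν * (x ^ 2 + 1) ^ ((μ - ν) / 2) * exp M := by
  rw [hInv_eq_integral_rpow hx]
  calc _ ≤ ∫ y in 0..x, y ^ (ν - 1) * (x ^ 2 + 1) ^ ((μ - ν) / 2) * exp M := by
        refine integral_mono_on hx (intervalIntegrable_hInv_integrand hν hg 0 x)
          (((intervalIntegrable_rpow' (by linarith)).mul_const _).mul_const _)
          fun y ⟨hy0, hyx⟩ => ?_
        have : 0 ≤ y ^ (ν - 1) := rpow_nonneg hy0 _
        gcongr
        exact hM y
    _ = _ := by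
        rw [intervalIntegral.integral_mul_const, intervalIntegral.integral_mul_const,
          integral_rpow (Or.inl (by linarith)), sub_add_cancel, zero_rpow hν.ne', sub_zero]
        field_simp

lemma le_hInv_of_pos (hμ : 0 < μ) (hν : 0 < ν) (hνμ : ν ≤ μ) (hg : Continuous g) (hx : 0 < x) :
    exp (-(μ - 1)) * x ^ ν * (x ^ 2 + 1) ^ ((μ - ν) / 2) * exp ((1 / x) * ∫ y in 0..x, g y) ≤
      hInv μ ν g x := by
  set p := (μ - ν) / 2
  set C := x ^ (ν - μ) * (x ^ 2 + 1) ^ p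
  set f := fun y => (μ - 1) * log y + g y
  have hf : IntervalIntegrable f volume 0 x :=
    (intervalIntegrable_log'.const_mul _).add (hg.intervalIntegrable _ _)
  have hexp_f : ∀ y, 0 < y → exp (f y) = y ^ (μ - 1) * exp (g y) := fun y hy => by
    rw [exp_add, rpow_def_of_pos hy, mul_comm (μ - 1)]
  have hef : IntervalIntegrable (fun y => exp (f y)) volume 0 x :=
    ((intervalIntegrable_rpow' (by linarith)).mul_continuousOn hg.rexp.continuousOn).congr_uIoo
      fun y hy => (hexp_f y (by rw [uIoo_of_le hx.le] at hy; exact hy.1)).symm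
  have hintegral_f : ∫ y in 0..x, f y = (μ - 1) * (x * log x - x) + ∫ y in 0..x, g y := by
    rw [integral_add (intervalIntegrable_log'.const_mul _) (hg.intervalIntegrable _ _),
      intervalIntegral.integral_const_mul, integral_log]
    simp
  have hweight : ∀ y ∈ Ioo 0 x,
      C * exp (f y) ≤ y ^ (ν - 1) * (y ^ 2 + 1) ^ p * exp (g y) := fun y ⟨hy0, hyx⟩ => by
    have hC : C ≤ y ^ (ν - μ) * (y ^ 2 + 1) ^ p := by
      have hexp : ν - μ = -(2 * p) := by ring
      simp only [C, hexp]
      exact antitoneOn_rpow_neg_two_mul_mul_sq_add_one_rpow (by linarith) hy0 hx hyx.le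
    calc C * exp (f y) ≤ y ^ (ν - μ) * (y ^ 2 + 1) ^ p * (y ^ (μ - 1) * exp (g y)) := by
          rw [hexp_f y hy0]; gcongr
      _ = y ^ (ν - 1) * (y ^ 2 + 1) ^ p * exp (g y) := by
          rw [show ν - 1 = (ν - μ) + (μ - 1) by ring, rpow_add hy0]; ring
  have hpow : x ^ (ν - μ) * x * x ^ (μ - 1) = x ^ ν := by
    rw [← rpow_add_one hx.ne', ← rpow_add hx]; ring_nf
  have havg : exp ((x - 0)⁻¹ * ∫ y in 0..x, f y) =
      x ^ (μ - 1) * exp (-(μ - 1)) * exp ((1 / x) * ∫ y in 0..x, g y) := by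
    rw [hintegral_f, rpow_def_of_pos hx, ← exp_add, ← exp_add]
    congr 1
    have := hx.ne'
    field_simp
    ring
  calc _ = C * ((x - 0) * exp ((x - 0)⁻¹ * ∫ y in 0..x, f y)) := by
        rw [havg, sub_zero, ← hpow]; ring
    _ ≤ C * ∫ y in 0..x, exp (f y) := by
        gcongr
        exact mul_exp_average_le_integral_exp hx hf hef
    _ = ∫ y in 0..x, C * exp (f y) := (intervalIntegral.integral_const_mul _ _).symm
    _ ≤ hInv μ ν g x := by
        rw [hInv_eq_integral_rpow hx.le]
        exact integral_mono_on_of_le_Ioo hx.le (hef.const_mul C)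
          (intervalIntegrable_hInv_integrand hν hg 0 x) hweight

lemma abs_hInv_le (hν : 0 < ν) (hνμ : ν ≤ μ) (hg : Continuous g) {M : ℝ} (hM : ∀ y, g y ≤ M)
    (x : ℝ) : |hInv μ ν g x| ≤ 1 / ν * |x| ^ ν * (x ^ 2 + 1) ^ ((μ - ν) / 2) * exp M := by
  wlog hx : 0 ≤ x generalizing g x
  · simpa [hInv_neg] using this (hg.comp continuous_neg) (fun y => hM (-y)) (-x) (by linarith)
  rw [abs_of_nonneg (hInv_nonneg hx), abs_of_nonneg hx]
  exact hInv_le_of_nonneg hν hνμ hg hM hx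

lemma le_abs_hInv (hμ : 0 < μ) (hν : 0 < ν) (hνμ : ν ≤ μ) (hg : Continuous g) (hx0 : x ≠ 0) :
    exp (-(μ - 1)) * |x| ^ ν * (x ^ 2 + 1) ^ ((μ - ν) / 2) * exp ((1 / x) * ∫ y in 0..x, g y) ≤
      |hInv μ ν g x| := by
  wlog hx : 0 < x generalizing g x
  · have hneg : 0 < -x := neg_pos.2 ((not_lt.1 hx).lt_of_ne hx0)
    have h := this (g := fun y => g (-y)) (hg.comp continuous_neg) (neg_ne_zero.2 hx0) hneg
    rw [one_div_neg_mul_integral_comp_neg, hInv_neg, abs_neg, abs_neg, neg_sq] at h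
    simpa only [neg_neg] using h
  rw [abs_of_nonneg (hInv_nonneg hx.le), abs_of_pos hx]
  exact le_hInv_of_pos hμ hν hνμ hg hx

end hInv

theorem statement4_general (μ ν : ℝ) (hμ1 : 1 / 2 < μ) (hν1 : 0 < ν) (hν2 : ν < 1 / 2)
    (g : ℝ → ℝ) (hg : Continuous g) (M : ℝ) (hM : ∀ x : ℝ, |g x| ≤ M) :
    (∀ x : ℝ,
      |hInv μ ν g x| ≤ 1 / ν * |x| ^ ν * (x ^ 2 + 1) ^ ((μ - ν) / 2) * Real.exp M) ∧
    (∀ x : ℝ, x ≠ 0 →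
      Real.exp (-(μ - 1)) * |x| ^ ν * (x ^ 2 + 1) ^ ((μ - ν) / 2) *
          Real.exp ((1 / x) * ∫ y in (0:ℝ)..x, g y) ≤ |hInv μ ν g x| ∧
      Real.exp (-(μ - 1)) * |x| ^ ν * (x ^ 2 + 1) ^ ((μ - ν) / 2) * Real.exp (-M) ≤
        Real.exp (-(μ - 1)) * |x| ^ ν * (x ^ 2 + 1) ^ ((μ - ν) / 2) *
          Real.exp ((1 / x) * ∫ y in (0:ℝ)..x, g y)) := by
  have hνμ : ν ≤ μ := by linarith
  refine ⟨abs_hInv_le hν1 hνμ hg fun y => (abs_le.1 (hM y)).2,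
    fun x hx => ⟨le_abs_hInv (by linarith) hν1 hνμ hg hx, ?_⟩⟩
  have havg : |(x - 0)⁻¹ * ∫ y in 0..x, g y| ≤ M := abs_inv_mul_integral_le hM 0 x
  rw [sub_zero, ← one_div] at havg
  gcongr
  exact (abs_le.1 havg).1

/-- Lemma 5.2, part 1: pointwise upper and lower bounds for `h⁻¹`, where
`⨍₀ˣ g = (1/x)∫₀ˣ g` is the average of `g` over the interval from `0` to `x`. -/
theorem statement4 (μ ν : ℝ) (hμ1 : 1 / 2 < μ) (hμ2 : μ ≤ 2) (hν1 : 0 < ν) (hν2 : ν < 1 / 2)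
    (g : ℝ → ℝ) (hg : Continuous g) (M : ℝ) (hM : ∀ x : ℝ, |g x| ≤ M) :
    (∀ x : ℝ,
      |hInv μ ν g x| ≤ 1 / ν * |x| ^ ν * (x ^ 2 + 1) ^ ((μ - ν) / 2) * Real.exp M) ∧
    (∀ x : ℝ, x ≠ 0 →
      Real.exp (-(μ - 1)) * |x| ^ ν * (x ^ 2 + 1) ^ ((μ - ν) / 2) *
          Real.exp ((1 / x) * ∫ y in (0:ℝ)..x, g y) ≤ |hInv μ ν g x| ∧
      Real.exp (-(μ - 1)) * |x| ^ ν * (x ^ 2 + 1) ^ ((μ - ν) / 2) * Real.exp (-M) ≤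
        Real.exp (-(μ - 1)) * |x| ^ ν * (x ^ 2 + 1) ^ ((μ - ν) / 2) *
          Real.exp ((1 / x) * ∫ y in (0:ℝ)..x, g y)) :=
  statement4_general μ ν hμ1 hν1 hν2 g hg M hM
end

section
/- There exists a constant c(μ,ν) > 0 depending only on μ and ν such that for every bounded continuous g : ℝ → ℝ, the constant κ = κ(g) satisfies (1/c(μ,ν)) e^(−2‖g‖_∞) ≤ κ ≤ c(μ,ν) e^(2‖g‖_∞). -/
open MeasureTheory Real Filter Set Bornology

/-! Write `h₀` for `h` at `g = 0`. Since `(h⁻¹)' = (h₀⁻¹)' e^g` and `h⁻¹` is its primitive from `0`,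
both `(h⁻¹)'(x)` and `x h⁻¹(x)` lie within a factor `e^{±‖g‖_∞}` of their values for `g = 0`.
Hence the integrand `1/(x h⁻¹(x) (h⁻¹)'(x))` defining `κ` lies within `e^{±2‖g‖_∞}` of the one
for `g = 0`, which is integrable: it is `O(|x|^{-2ν})` at `0` and `O(|x|^{-2μ})` at infinity.
So `κ(g)` lies within `e^{±2‖g‖_∞}` of `κ(0) > 0`, and `c = max(κ(0), κ(0)⁻¹)` works. -/

lemma intervalIntegrable_abs_rpow {r : ℝ} (hr : -1 < r) (a b : ℝ) :
    IntervalIntegrable (fun y : ℝ => |y| ^ r) volume a b := by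
  have of_nonneg : ∀ c : ℝ, 0 ≤ c → IntervalIntegrable (fun y : ℝ => |y| ^ r) volume 0 c := by
    intro c hc
    refine (intervalIntegral.intervalIntegrable_rpow' hr).congr_ae ?_
    rw [uIoc_of_le hc]
    filter_upwards [ae_restrict_mem measurableSet_Ioc] with y hy
    rw [abs_of_pos hy.1]
  have from_zero : ∀ c : ℝ, IntervalIntegrable (fun y : ℝ => |y| ^ r) volume 0 c := by
    intro c
    rcases le_total 0 c with hc | hc
    · exact of_nonneg c hc
    · simpa using (IntervalIntegrable.iff_comp_neg).mp (of_nonneg (-c) (by linarith))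
  exact (from_zero a).symm.trans (from_zero b)

lemma mul_intervalIntegral_le_mul_intervalIntegral {f g : ℝ → ℝ} {x : ℝ}
    (hf : IntervalIntegrable f volume 0 x) (hg : IntervalIntegrable g volume 0 x)
    (hfg : ∀ y, f y ≤ g y) : x * ∫ y in 0..x, f y ≤ x * ∫ y in 0..x, g y := by
  rcases le_total 0 x with hx | hx
  · exact mul_le_mul_of_nonneg_left (intervalIntegral.integral_mono hx hf hg hfg) hx
  · have h := intervalIntegral.integral_mono hx hf.symm hg.symm hfg
    rw [intervalIntegral.integral_symm x 0, intervalIntegral.integral_symm x 0]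
    nlinarith

lemma mul_intervalIntegral_pos {f : ℝ → ℝ} {x : ℝ} (hf : IntervalIntegrable f volume 0 x)
    (hpos : ∀ y, y ≠ 0 → 0 < f y) (hx : x ≠ 0) : 0 < x * ∫ y in 0..x, f y := by
  rcases hx.lt_or_gt with hx | hx
  · rw [intervalIntegral.integral_symm]
    exact mul_pos_of_neg_of_neg hx <| neg_neg_of_pos <|
      intervalIntegral.intervalIntegral_pos_of_pos_on hf.symm (fun y hy => hpos y hy.2.ne) hx
  · exact mul_pos hx <|
      intervalIntegral.intervalIntegral_pos_of_pos_on hf (fun y hy => hpos y hy.1.ne') hx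

lemma integrable_of_even {f : ℝ → ℝ} (heven : Function.Even f)
    (hf : IntegrableOn f (Ioi 0)) : Integrable f := by
  have hIic : IntegrableOn f (Iic 0) := by
    have hneg : MeasurableEmbedding fun x : ℝ => -x := (Homeomorph.neg ℝ).measurableEmbedding
    rw [← Measure.map_neg_eq_self (volume : Measure ℝ), hneg.integrableOn_map_iff]
    simpa [Function.comp_def, heven _] using (integrableOn_Ici_iff_integrableOn_Ioi).2 hf
  rw [← integrableOn_univ, ← Iic_union_Ioi (a := (0 : ℝ))]
  exact hIic.union hf

lemma integral_mem_Icc_of_forall_mem_Icc {α : Type*} [MeasurableSpace α] {m : Measure α}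
    {f f₀ : α → ℝ} {a b : ℝ} (ha : 0 ≤ a) (hf₀ : Integrable f₀ m) (hf₀_nonneg : ∀ x, 0 ≤ f₀ x)
    (hf : AEStronglyMeasurable f m) (hbound : ∀ x, f x ∈ Icc (a * f₀ x) (b * f₀ x)) :
    ∫ x, f x ∂m ∈ Icc (a * ∫ x, f₀ x ∂m) (b * ∫ x, f₀ x ∂m) := by
  have hf_int : Integrable f m := by
    refine (hf₀.const_mul b).mono' hf (ae_of_all _ fun x => ?_)
    rw [Real.norm_eq_abs, abs_of_nonneg ((mul_nonneg ha (hf₀_nonneg x)).trans (hbound x).1)]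
    exact (hbound x).2
  rw [← integral_const_mul, ← integral_const_mul]
  exact ⟨integral_mono (hf₀.const_mul a) hf_int fun x => (hbound x).1,
    integral_mono hf_int (hf₀.const_mul b) fun x => (hbound x).2⟩

lemma mul_mem_Icc_exp_mul {a b a₀ b₀ K L : ℝ} (ha₀ : 0 ≤ a₀) (hb₀ : 0 ≤ b₀)
    (ha : a ∈ Icc (exp (-K) * a₀) (exp K * a₀)) (hb : b ∈ Icc (exp (-L) * b₀) (exp L * b₀)) :
    a * b ∈ Icc (exp (-(K + L)) * (a₀ * b₀)) (exp (K + L) * (a₀ * b₀)) := by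
  have ha_nonneg : 0 ≤ a := (by positivity : 0 ≤ exp (-K) * a₀).trans ha.1
  have hb_nonneg : 0 ≤ b := (by positivity : 0 ≤ exp (-L) * b₀).trans hb.1
  rw [neg_add, exp_add, exp_add]
  constructor
  · calc exp (-K) * exp (-L) * (a₀ * b₀) = (exp (-K) * a₀) * (exp (-L) * b₀) := by ring
      _ ≤ a * b := mul_le_mul ha.1 hb.1 (by positivity) ha_nonneg
  · calc a * b ≤ (exp K * a₀) * (exp L * b₀) := mul_le_mul ha.2 hb.2 hb_nonneg (by positivity)
      _ = exp K * exp L * (a₀ * b₀) := by ring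

lemma div_mem_Icc_exp_mul {c D D₀ K : ℝ} (hc : 0 ≤ c) (hD₀ : 0 < D₀)
    (hD : D ∈ Icc (exp (-K) * D₀) (exp K * D₀)) :
    c / D ∈ Icc (exp (-K) * (c / D₀)) (exp K * (c / D₀)) := by
  have hD_pos : 0 < D := (by positivity : 0 < exp (-K) * D₀).trans_le hD.1
  constructor
  · calc exp (-K) * (c / D₀) = c / (exp K * D₀) := by rw [exp_neg]; field_simp
      _ ≤ c / D := div_le_div_of_nonneg_left hc hD_pos hD.2
  · calc c / D ≤ c / (exp (-K) * D₀) := div_le_div_of_nonneg_left hc (by positivity) hD.1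
      _ = exp K * (c / D₀) := by rw [exp_neg]; field_simp

section

variable {μ ν : ℝ} {g : ℝ → ℝ} {M x : ℝ}

noncomputable def kappaIntegrand (μ ν : ℝ) (g : ℝ → ℝ) (x : ℝ) : ℝ :=
  1 / (x * hInv μ ν g x * hInvDeriv μ ν g x)

lemma kappa_eq_div_integral (μ ν : ℝ) (g : ℝ → ℝ) :
    kappa μ ν g = (μ - ν) * π / ∫ x, kappaIntegrand μ ν g x := rfl

lemma hInv_eq_integral (μ ν : ℝ) (g : ℝ → ℝ) (x : ℝ) :
    hInv μ ν g x = ∫ y in 0..x, hInvDeriv μ ν g y := rfl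

lemma hInvDeriv_zero_apply (μ ν x : ℝ) :
    hInvDeriv μ ν 0 x = |x| ^ (ν - 1) * (x ^ 2 + 1) ^ ((μ - ν) / 2) := by
  simp [hInvDeriv]

lemma hInvDeriv_eq_mul_exp (μ ν : ℝ) (g : ℝ → ℝ) (x : ℝ) :
    hInvDeriv μ ν g x = hInvDeriv μ ν 0 x * exp (g x) := by
  rw [hInvDeriv_zero_apply]; rfl

lemma hInvDeriv_nonneg (μ ν : ℝ) (g : ℝ → ℝ) (x : ℝ) : 0 ≤ hInvDeriv μ ν g x := by
  unfold hInvDeriv; positivity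

lemma hInvDeriv_pos (μ ν : ℝ) (g : ℝ → ℝ) (hx : x ≠ 0) : 0 < hInvDeriv μ ν g x := by
  have := abs_pos.2 hx
  unfold hInvDeriv; positivity

lemma hInvDeriv_zero_neg (μ ν x : ℝ) : hInvDeriv μ ν 0 (-x) = hInvDeriv μ ν 0 x := by
  simp [hInvDeriv]

lemma intervalIntegrable_hInvDeriv (hν : 0 < ν) (hg : Continuous g) (a b : ℝ) :
    IntervalIntegrable (hInvDeriv μ ν g) volume a b := by
  have hpow : Continuous fun y : ℝ => (y ^ 2 + 1) ^ ((μ - ν) / 2) :=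
    (by fun_prop : Continuous fun y : ℝ => y ^ 2 + 1).rpow_const fun y => Or.inl (by positivity)
  exact ((intervalIntegrable_abs_rpow (by linarith) a b).mul_continuousOn
    hpow.continuousOn).mul_continuousOn (by fun_prop)

lemma continuous_hInv (hν : 0 < ν) (hg : Continuous g) : Continuous (hInv μ ν g) :=
  intervalIntegral.continuous_primitive (intervalIntegrable_hInvDeriv hν hg) 0

lemma mul_hInv_pos (hν : 0 < ν) (hg : Continuous g) (hx : x ≠ 0) : 0 < x * hInv μ ν g x :=
  mul_intervalIntegral_pos (intervalIntegrable_hInvDeriv hν hg 0 x)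
    (fun _ hy => hInvDeriv_pos μ ν g hy) hx

lemma hInv_zero_neg (μ ν x : ℝ) : hInv μ ν 0 (-x) = -hInv μ ν 0 x := by
  have h := intervalIntegral.integral_comp_neg (a := 0) (b := x) (hInvDeriv μ ν 0)
  simp only [hInvDeriv_zero_neg, neg_zero] at h
  rw [hInv_eq_integral, hInv_eq_integral, intervalIntegral.integral_symm, ← h]

lemma hInvDeriv_mem_Icc (hM : ∀ y, |g y| ≤ M) (x : ℝ) :
    hInvDeriv μ ν g x ∈ Icc (exp (-M) * hInvDeriv μ ν 0 x) (exp M * hInvDeriv μ ν 0 x) := by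
  obtain ⟨hlo, hhi⟩ := abs_le.1 (hM x)
  rw [hInvDeriv_eq_mul_exp μ ν g, mul_comm (exp (-M)), mul_comm (exp M)]
  exact ⟨mul_le_mul_of_nonneg_left (exp_le_exp.2 hlo) (hInvDeriv_nonneg μ ν 0 x),
    mul_le_mul_of_nonneg_left (exp_le_exp.2 hhi) (hInvDeriv_nonneg μ ν 0 x)⟩

lemma mul_hInv_mem_Icc (hν : 0 < ν) (hg : Continuous g) (hM : ∀ y, |g y| ≤ M) (x : ℝ) :
    x * hInv μ ν g x ∈ Icc (exp (-M) * (x * hInv μ ν 0 x)) (exp M * (x * hInv μ ν 0 x)) := by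
  have h₀ := intervalIntegrable_hInvDeriv (μ := μ) hν continuous_zero 0 x
  have h := intervalIntegrable_hInvDeriv (μ := μ) hν hg 0 x
  rw [hInv_eq_integral, hInv_eq_integral, mul_left_comm (exp (-M)), mul_left_comm (exp M),
    ← intervalIntegral.integral_const_mul (exp (-M)), ← intervalIntegral.integral_const_mul (exp M)]
  exact ⟨mul_intervalIntegral_le_mul_intervalIntegral (h₀.const_mul _) h
      fun y => (hInvDeriv_mem_Icc hM y).1,
    mul_intervalIntegral_le_mul_intervalIntegral h (h₀.const_mul _)
      fun y => (hInvDeriv_mem_Icc hM y).2⟩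

lemma measurable_kappaIntegrand (hν : 0 < ν) (hg : Continuous g) :
    Measurable (kappaIntegrand μ ν g) := by
  have : Measurable (hInvDeriv μ ν g) := by unfold hInvDeriv; fun_prop
  exact measurable_const.div ((measurable_id.mul (continuous_hInv hν hg).measurable).mul this)

lemma kappaIntegrand_nonneg (hν : 0 < ν) (hg : Continuous g) (x : ℝ) :
    0 ≤ kappaIntegrand μ ν g x := by
  rcases eq_or_ne x 0 with rfl | hx
  · simp [kappaIntegrand]
  · exact one_div_nonneg.2 (mul_nonneg (mul_hInv_pos hν hg hx).le (hInvDeriv_nonneg μ ν g x))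

lemma kappaIntegrand_mem_Icc (hν : 0 < ν) (hg : Continuous g) (hM : ∀ y, |g y| ≤ M)
    (x : ℝ) : kappaIntegrand μ ν g x ∈
      Icc (exp (-(2 * M)) * kappaIntegrand μ ν 0 x) (exp (2 * M) * kappaIntegrand μ ν 0 x) := by
  rcases eq_or_ne x 0 with rfl | hx
  · simp [kappaIntegrand]
  rw [two_mul]
  exact div_mem_Icc_exp_mul zero_le_one
    (mul_pos (mul_hInv_pos hν continuous_zero hx) (hInvDeriv_pos μ ν 0 hx))
    (mul_mem_Icc_exp_mul (mul_hInv_pos hν continuous_zero hx).le (hInvDeriv_nonneg μ ν 0 x)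
      (mul_hInv_mem_Icc hν hg hM x) (hInvDeriv_mem_Icc hM x))

lemma rpow_le_hInvDeriv_zero (hνμ : ν ≤ μ) (hx : 0 ≤ x) : x ^ (ν - 1) ≤ hInvDeriv μ ν 0 x := by
  rw [hInvDeriv_zero_apply, abs_of_nonneg hx]
  exact le_mul_of_one_le_right (rpow_nonneg hx _) (one_le_rpow (by nlinarith) (by linarith))

lemma rpow_le_hInvDeriv_zero_of_one_le (hνμ : ν ≤ μ) (hx : 1 ≤ x) :
    x ^ (μ - 1) ≤ hInvDeriv μ ν 0 x := by
  have hx₀ : 0 < x := one_pos.trans_le hx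
  have hsq : x ^ (μ - ν) = (x ^ 2) ^ ((μ - ν) / 2) := by
    rw [← rpow_natCast, ← rpow_mul hx₀.le]; congr 1; push_cast; ring
  calc x ^ (μ - 1) = x ^ (ν - 1) * (x ^ 2) ^ ((μ - ν) / 2) := by
        rw [← hsq, ← rpow_add hx₀]; ring_nf
    _ ≤ hInvDeriv μ ν 0 x := by
        rw [hInvDeriv_zero_apply, abs_of_pos hx₀]
        gcongr
        linarith

lemma rpow_div_le_hInv_zero (hν : 0 < ν) (hνμ : ν ≤ μ) (hx : 0 < x) :
    x ^ ν / ν ≤ hInv μ ν 0 x := by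
  have h := intervalIntegral.integral_mono_on hx.le
    (intervalIntegral.intervalIntegrable_rpow' (by linarith : (-1 : ℝ) < ν - 1))
    (intervalIntegrable_hInvDeriv (μ := μ) hν continuous_zero 0 x)
    fun y hy => rpow_le_hInvDeriv_zero hνμ hy.1
  rwa [integral_rpow (Or.inl (by linarith)), sub_add_cancel, zero_rpow hν.ne', sub_zero] at h

lemma rpow_div_le_hInv_zero_of_one_le (hν : 0 < ν) (hνμ : ν ≤ μ) (hx : 1 ≤ x) :
    x ^ μ / μ ≤ hInv μ ν 0 x := by
  have hμ : 0 < μ := hν.trans_le hνμ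
  have htail := intervalIntegral.integral_mono_on hx
    (intervalIntegral.intervalIntegrable_rpow' (by linarith : (-1 : ℝ) < μ - 1))
    (intervalIntegrable_hInvDeriv (μ := μ) hν continuous_zero 1 x)
    fun y hy => rpow_le_hInvDeriv_zero_of_one_le hνμ hy.1
  rw [integral_rpow (Or.inl (by linarith)), sub_add_cancel, one_rpow] at htail
  have hhead : 1 / ν ≤ hInv μ ν 0 1 := by
    simpa using rpow_div_le_hInv_zero hν hνμ one_pos
  have hsplit : hInv μ ν 0 1 + ∫ y in 1..x, hInvDeriv μ ν 0 y = hInv μ ν 0 x :=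
    intervalIntegral.integral_add_adjacent_intervals
      (intervalIntegrable_hInvDeriv hν continuous_zero 0 1)
      (intervalIntegrable_hInvDeriv hν continuous_zero 1 x)
  have : 1 / μ ≤ 1 / ν := one_div_le_one_div_of_le hν hνμ
  have : (x ^ μ - 1) / μ + 1 / μ = x ^ μ / μ := by ring
  linarith

lemma kappaIntegrand_zero_le_rpow {p : ℝ} (hν : 0 < ν) (hp : 0 < p) (hx : 0 < x)
    (hH : x ^ p / p ≤ hInv μ ν 0 x) (hw : x ^ (p - 1) ≤ hInvDeriv μ ν 0 x) :
    kappaIntegrand μ ν 0 x ≤ p * x ^ (-(2 * p)) := by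
  have hprod : x * (x ^ p / p) * x ^ (p - 1) = x ^ (2 * p) / p := by
    rw [show 2 * p = 1 + p + (p - 1) by ring, rpow_add hx, rpow_add hx, rpow_one]; ring
  have hD : x ^ (2 * p) / p ≤ x * hInv μ ν 0 x * hInvDeriv μ ν 0 x := by
    rw [← hprod]
    gcongr
    exact (mul_hInv_pos hν continuous_zero hx.ne').le
  calc kappaIntegrand μ ν 0 x ≤ 1 / (x ^ (2 * p) / p) :=
        one_div_le_one_div_of_le (by positivity) hD
    _ = p * x ^ (-(2 * p)) := by rw [rpow_neg hx.le]; field_simp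

lemma even_kappaIntegrand_zero (μ ν : ℝ) : Function.Even (kappaIntegrand μ ν 0) := fun x => by
  simp only [kappaIntegrand, hInv_zero_neg, hInvDeriv_zero_neg, neg_mul_neg]

lemma integrable_kappaIntegrand_zero (hμ : 1 / 2 < μ) (hν : 0 < ν) (hν' : ν < 1 / 2) :
    Integrable (kappaIntegrand μ ν 0) := by
  have hνμ : ν ≤ μ := by linarith
  have hmeas := (measurable_kappaIntegrand (μ := μ) hν continuous_zero).aestronglyMeasurable
    (μ := volume)
  refine integrable_of_even (even_kappaIntegrand_zero μ ν) ?_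
  rw [← Ioc_union_Ioi_eq_Ioi zero_le_one]
  refine IntegrableOn.union ?_ ?_
  · refine ((intervalIntegral.intervalIntegrable_rpow' (a := 0) (b := 1)
      (by linarith : (-1 : ℝ) < -(2 * ν))).1.const_mul ν).mono' hmeas.restrict ?_
    filter_upwards [ae_restrict_mem measurableSet_Ioc] with y hy
    rw [Real.norm_eq_abs, abs_of_nonneg (kappaIntegrand_nonneg hν continuous_zero y)]
    exact kappaIntegrand_zero_le_rpow hν hν hy.1 (rpow_div_le_hInv_zero hν hνμ hy.1)
      (rpow_le_hInvDeriv_zero hνμ hy.1.le)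
  · refine ((integrableOn_Ioi_rpow_of_lt (by linarith : -(2 * μ) < -1) one_pos).const_mul μ).mono'
      hmeas.restrict ?_
    filter_upwards [ae_restrict_mem measurableSet_Ioi] with y hy
    rw [Real.norm_eq_abs, abs_of_nonneg (kappaIntegrand_nonneg hν continuous_zero y)]
    exact kappaIntegrand_zero_le_rpow hν (by linarith) (one_pos.trans hy)
      (rpow_div_le_hInv_zero_of_one_le hν hνμ hy.le) (rpow_le_hInvDeriv_zero_of_one_le hνμ hy.le)

lemma integral_kappaIntegrand_zero_pos (hμ : 1 / 2 < μ) (hν : 0 < ν) (hν' : ν < 1 / 2) :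
    0 < ∫ x, kappaIntegrand μ ν 0 x := by
  refine (integral_pos_iff_support_of_nonneg (kappaIntegrand_nonneg hν continuous_zero)
    (integrable_kappaIntegrand_zero hμ hν hν')).2 ?_
  have hsupp : Ioi 0 ⊆ Function.support (kappaIntegrand μ ν 0) := fun y hy =>
    (one_div_pos.2 (mul_pos (mul_hInv_pos hν continuous_zero hy.ne')
      (hInvDeriv_pos μ ν 0 hy.ne'))).ne'
  exact (by simp : (0 : ENNReal) < volume (Ioi (0 : ℝ))).trans_le (measure_mono hsupp)

lemma kappa_zero_pos (hμ : 1 / 2 < μ) (hν : 0 < ν) (hν' : ν < 1 / 2) : 0 < kappa μ ν 0 :=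
  div_pos (mul_pos (by linarith) pi_pos) (integral_kappaIntegrand_zero_pos hμ hν hν')

lemma kappa_mem_Icc (hμ : 1 / 2 < μ) (hν : 0 < ν) (hν' : ν < 1 / 2) (hg : Continuous g)
    (hM : ∀ y, |g y| ≤ M) :
    kappa μ ν g ∈ Icc (exp (-(2 * M)) * kappa μ ν 0) (exp (2 * M) * kappa μ ν 0) := by
  rw [kappa_eq_div_integral, kappa_eq_div_integral]
  exact div_mem_Icc_exp_mul (mul_nonneg (by linarith) pi_pos.le)
    (integral_kappaIntegrand_zero_pos hμ hν hν')
    (integral_mem_Icc_of_forall_mem_Icc (exp_pos _).le (integrable_kappaIntegrand_zero hμ hν hν')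
      (kappaIntegrand_nonneg hν continuous_zero)
      (measurable_kappaIntegrand hν hg).aestronglyMeasurable (kappaIntegrand_mem_Icc hν hg hM))

end

theorem statement6_general (μ ν : ℝ) (hμ1 : 1 / 2 < μ) (hν1 : 0 < ν) (hν2 : ν < 1 / 2) :
    ∃ c : ℝ, 0 < c ∧ ∀ g : ℝ → ℝ, Continuous g → ∀ M : ℝ, (∀ x : ℝ, |g x| ≤ M) →
      1 / c * Real.exp (-2 * M) ≤ kappa μ ν g ∧ kappa μ ν g ≤ c * Real.exp (2 * M) := by
  set κ₀ := kappa μ ν 0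
  have hκ₀ : 0 < κ₀ := kappa_zero_pos hμ1 hν1 hν2
  refine ⟨max κ₀ κ₀⁻¹, hκ₀.trans_le (le_max_left _ _), fun g hg M hM => ?_⟩
  obtain ⟨hlo, hhi⟩ := kappa_mem_Icc hμ1 hν1 hν2 hg hM
  have hc : 1 / max κ₀ κ₀⁻¹ ≤ κ₀ := by
    simpa using one_div_le_one_div_of_le (inv_pos.2 hκ₀) (le_max_right κ₀ κ₀⁻¹)
  constructor
  · calc 1 / max κ₀ κ₀⁻¹ * exp (-2 * M) ≤ κ₀ * exp (-2 * M) := by gcongr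
      _ ≤ kappa μ ν g := by rw [mul_comm, neg_mul]; exact hlo
  · calc kappa μ ν g ≤ κ₀ * exp (2 * M) := by rw [mul_comm]; exact hhi
      _ ≤ max κ₀ κ₀⁻¹ * exp (2 * M) := by gcongr; exact le_max_left _ _

/-- Lemma 5.3: the constant `κ(g)` satisfies
`(1/c(μ,ν)) e^(−2‖g‖_∞) ≤ κ ≤ c(μ,ν) e^(2‖g‖_∞)`. -/
theorem statement6 (μ ν : ℝ) (hμ1 : 1 / 2 < μ) (hμ2 : μ ≤ 2) (hν1 : 0 < ν) (hν2 : ν < 1 / 2) :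
    ∃ c : ℝ, 0 < c ∧ ∀ g : ℝ → ℝ, Continuous g → ∀ M : ℝ, (∀ x : ℝ, |g x| ≤ M) →
      1 / c * Real.exp (-2 * M) ≤ kappa μ ν g ∧ kappa μ ν g ≤ c * Real.exp (2 * M) :=
  statement6_general μ ν hμ1 hν1 hν2
end

section
/- Let 𝔉 : ℝ → ℝ be continuously differentiable, with 𝔉' even, nonnegative, and decreasing on [0,∞), and suppose the limits 𝔉(±∞) exist with 𝔉(+∞) − 𝔉(−∞) = (μ−ν)π. Then: (i) for all x ∈ ℝ, D𝔉(0, x) = D𝔉(0, −x) (the Hilbert-transform difference is an even function of x); (ii) for all 0 ≤ x < y, D𝔉(x, y) ≥ 0 (it is increasing on [0,∞)); and (iii) for all y > x ≥ 0, D𝔉(x, y) = (1/π) ∫ₓʸ (𝔉(γ) − 𝔉(−γ))/γ dγ + ℜ(x,y) with −2(μ−ν) ≤ ℜ(x,y) ≤ 2(μ−ν). -/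
/-!
Write `f = 𝔉'`. Since `𝔉(y ∓ γ) − 𝔉(x ∓ γ) = ∫ₓʸ f(t ∓ γ) dt`, Tonelli turns `π·D𝔉(x, y)` into
`∫ₓʸ ∫₀^∞ (f(t − γ) − f(t + γ))/γ dγ dt`, with a nonnegative integrand because `f` is even and
decreasing on `[0, ∞)`; this gives (ii), and (i) holds because `𝔉(t) + 𝔉(−t)` is constant.
The main term of (iii) is `∫ₓʸ ∫₀^{2t} f(t − γ)/t dγ dt`. On each of the regions `γ ≥ 2t`,
`γ ≤ t/2`, `t/2 < γ ≤ t` and `t < γ ≤ 2t` the two kernels differ, in either direction, by at most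
an explicit nonnegative kernel. The total masses of these kernels over the quadrant are given by
Frullani's integral and a Hardy-type identity: with `c = ∫₀^∞ f = (𝔉(+∞) − 𝔉(−∞))/2` they are
`(log 2 + log 3 + 1)·c ≤ 4c` and `(log 3 + 1)·c ≤ 4c`, and `4c = 2(μ − ν)π`.
-/

open MeasureTheory Real Filter Set

/-- The Hilbert-transform difference
`D𝔉(x,y) = (1/π)∫₀^∞ (𝔉(y−γ) − 𝔉(y+γ) − 𝔉(x−γ) + 𝔉(x+γ))/γ dγ`,
formally equal to `H𝔉(y) − H𝔉(x)`. -/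
noncomputable def DF (F : ℝ → ℝ) (x y : ℝ) : ℝ :=
  (1 / Real.pi) * ∫ γ in Set.Ioi (0 : ℝ), (F (y - γ) - F (y + γ) - F (x - γ) + F (x + γ)) / γ

open scoped ENNReal Topology

lemma lintegral_Ioi_indicator_Ioc {g : ℝ → ℝ} (hg : Continuous g) {p q : ℝ} (hp : 0 ≤ p)
    (hpq : p ≤ q) (hg0 : ∀ x ∈ Ioc p q, 0 ≤ g x) :
    ∫⁻ x in Ioi 0, (Ioc p q).indicator (fun x => ENNReal.ofReal (g x)) x =
      ENNReal.ofReal (∫ x in p..q, g x) := by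
  rw [lintegral_indicator measurableSet_Ioc, Measure.restrict_restrict measurableSet_Ioc,
    inter_eq_left.2 (Ioc_subset_Ioi_self.trans (Ioi_subset_Ioi hp)),
    intervalIntegral.integral_of_le hpq,
    ofReal_integral_eq_lintegral_ofReal hg.integrableOn_Ioc
      ((ae_restrict_iff' measurableSet_Ioc).2 (ae_of_all _ hg0))]

lemma lintegral_lintegral_add {α β : Type*} [MeasurableSpace α] [MeasurableSpace β]
    {μ : Measure α} {ν : Measure β} [SFinite ν] {g h : α → β → ℝ≥0∞}
    (hg : Measurable (Function.uncurry g)) :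
    ∫⁻ x, ∫⁻ y, (g x y + h x y) ∂ν ∂μ = (∫⁻ x, ∫⁻ y, g x y ∂ν ∂μ) + ∫⁻ x, ∫⁻ y, h x y ∂ν ∂μ := by
  refine (lintegral_congr fun x => lintegral_add_left (hg.comp measurable_prodMk_left) _).trans ?_
  exact lintegral_add_left hg.lintegral_prod_right' _

lemma lintegral_Ioi_ofReal_eq_of_tendsto {g : ℝ → ℝ} (hg : ContinuousOn g (Ioi 0))
    (hg0 : ∀ x ∈ Ioi (0 : ℝ), 0 ≤ g x) {I : ℝ}
    (hI : Tendsto (fun p : ℝ × ℝ => ∫ x in p.1..p.2, g x) (𝓝[>] 0 ×ˢ atTop) (𝓝 I)) :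
    ∫⁻ x in Ioi 0, ENNReal.ofReal (g x) = ENNReal.ofReal I := by
  have hcover : AECover (volume.restrict (Ioi 0)) (𝓝[>] 0 ×ˢ atTop)
      (fun p : ℝ × ℝ => Ioc p.1 p.2) :=
    (aecover_Ioi_of_Ioi (tendsto_fst.mono_right nhdsWithin_le_nhds)).inter
      (aecover_Iic tendsto_snd)
  refine hcover.lintegral_eq_of_tendsto _ ((hg.aemeasurable measurableSet_Ioi).ennreal_ofReal)
    (((ENNReal.continuous_ofReal.tendsto I).comp hI).congr' ?_)
  filter_upwards [prod_mem_prod (Ioo_mem_nhdsGT one_pos) (Ici_mem_atTop 1)] with p ⟨hp1, hp2⟩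
  have hsub : Icc p.1 p.2 ⊆ Ioi 0 := fun x hx => hp1.1.trans_le hx.1
  rw [Function.comp_apply, Measure.restrict_restrict measurableSet_Ioc,
    inter_eq_left.2 (Ioc_subset_Icc_self.trans hsub),
    intervalIntegral.integral_of_le (by linarith [hp1.2, mem_Ici.1 hp2]),
    ofReal_integral_eq_lintegral_ofReal
      ((hg.mono hsub).integrableOn_compact isCompact_Icc |>.mono_set Ioc_subset_Icc_self)
      ((ae_restrict_iff' measurableSet_Ioc).2
        (ae_of_all _ fun x hx => hg0 x (hsub (Ioc_subset_Icc_self hx))))]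

/-- Unlike `Frullani.integral_Ioi_eq`, this needs no integrability hypothesis: monotonicity of
`F` makes the integrand nonnegative. -/
theorem lintegral_Ioi_frullani {F : ℝ → ℝ} (hFc : Continuous F) (hFm : Monotone F) {A : ℝ}
    (hA : Tendsto F atTop (𝓝 A)) {k₁ k₂ : ℝ} (hk₁ : 0 < k₁) (hk : k₁ ≤ k₂) :
    ∫⁻ t in Ioi 0, ENNReal.ofReal ((F (k₂ * t) - F (k₁ * t)) / t) =
      ENNReal.ofReal (log (k₂ / k₁) * (A - F 0)) := by
  refine lintegral_Ioi_ofReal_eq_of_tendsto (g := fun t => (F (k₂ * t) - F (k₁ * t)) / t)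
    ((by fun_prop : Continuous fun t => F (k₂ * t) - F (k₁ * t)).continuousOn.div
      continuousOn_id fun t ht => ht.ne')
    (fun t ht => div_nonneg (sub_nonneg.2 (hFm (by nlinarith [mem_Ioi.1 ht]))) (le_of_lt ht)) ?_
  have h := Frullani.tendsto_intervalIntegral (hFc.locallyIntegrable.locallyIntegrableOn _) hk₁
    (hk₁.trans_le hk) ((hFc.tendsto 0).mono_left nhdsWithin_le_nhds) hA
  convert h.neg using 1
  · ext p
    rw [← intervalIntegral.integral_neg]
    congr 1; ext t
    rw [smul_eq_mul]; ring
  · rw [smul_eq_mul]; ring_nf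

lemma lintegral_Ioi_inv_sq {c : ℝ} (hc : 0 < c) :
    ∫⁻ t in Ioi c, ENNReal.ofReal ((t ^ 2)⁻¹) = ENNReal.ofReal c⁻¹ := by
  have hderiv : ∀ t ∈ Ici c, HasDerivAt (fun t : ℝ => -t⁻¹) ((t ^ 2)⁻¹) t := fun t ht => by
    simpa using (hasDerivAt_inv (hc.trans_le ht).ne').fun_neg
  have hpos : ∀ t ∈ Ioi c, 0 ≤ (t ^ 2)⁻¹ := fun t _ => by positivity
  have hlim : Tendsto (fun t : ℝ => -t⁻¹) atTop (𝓝 0) := by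
    simpa using (tendsto_inv_atTop_zero (𝕜 := ℝ)).neg
  rw [← ofReal_integral_eq_lintegral_ofReal (integrableOn_Ioi_deriv_of_nonneg' hderiv hpos hlim)
    ((ae_restrict_iff' measurableSet_Ioi).2 (ae_of_all _ hpos)),
    integral_Ioi_of_hasDerivAt_of_nonneg' hderiv hpos hlim, zero_sub, neg_neg]

theorem lintegral_Ioi_hardy {g : ℝ → ℝ} (hg : Continuous g) (hg0 : ∀ x, 0 ≤ g x) {k : ℝ}
    (hk : 0 < k) :
    ∫⁻ t in Ioi 0, ENNReal.ofReal ((∫ s in 0..t / k, s * g s) / t ^ 2) =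
      ENNReal.ofReal k⁻¹ * ∫⁻ s in Ioi 0, ENNReal.ofReal (g s) := by
  have hinner : ∀ t ∈ Ioi (0 : ℝ), ENNReal.ofReal ((∫ s in 0..t / k, s * g s) / t ^ 2) =
      ∫⁻ s in Ioi 0, (Ioc 0 (t / k)).indicator (fun s => ENNReal.ofReal (s * g s / t ^ 2)) s :=
    fun t ht => by
      rw [lintegral_Ioi_indicator_Ioc (by fun_prop) le_rfl (div_nonneg (le_of_lt ht) hk.le)
        fun s hs => div_nonneg (mul_nonneg hs.1.le (hg0 s)) (sq_nonneg t),
        intervalIntegral.integral_div]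
  have hmeas : Measurable (Function.uncurry fun t s : ℝ =>
      (Ioc 0 (t / k)).indicator (fun s => ENNReal.ofReal (s * g s / t ^ 2)) s) := by
    simp only [Function.uncurry_def, indicator_apply, mem_Ioc]
    exact Measurable.ite (by measurability) (by fun_prop) measurable_const
  rw [setLIntegral_congr_fun measurableSet_Ioi hinner, lintegral_lintegral_swap hmeas.aemeasurable,
    ← lintegral_const_mul' _ _ ENNReal.ofReal_ne_top]
  refine setLIntegral_congr_fun measurableSet_Ioi fun s (hs : 0 < s) => ?_
  have hks : 0 < k * s := mul_pos hk hs
  have hpt : ∀ t ∈ Ioi (0 : ℝ),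
      (Ioc 0 (t / k)).indicator (fun s => ENNReal.ofReal (s * g s / t ^ 2)) s =
        (Ici (k * s)).indicator
          (fun t => ENNReal.ofReal (s * g s) * ENNReal.ofReal ((t ^ 2)⁻¹)) t := fun t _ => by
    by_cases h : k * s ≤ t
    · rw [indicator_of_mem (show s ∈ Ioc 0 (t / k) from ⟨hs, (le_div_iff₀' hk).2 h⟩),
        indicator_of_mem (mem_Ici.2 h), ← ENNReal.ofReal_mul (mul_nonneg hs.le (hg0 s)),
        div_eq_mul_inv]
    · rw [indicator_of_notMem fun h' => h ((le_div_iff₀' hk).1 h'.2),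
        indicator_of_notMem fun h' => h (mem_Ici.1 h')]
  rw [setLIntegral_congr_fun measurableSet_Ioi hpt, lintegral_indicator measurableSet_Ici,
    Measure.restrict_restrict measurableSet_Ici, inter_eq_left.2 (Ici_subset_Ioi.2 hks),
    setLIntegral_congr Ioi_ae_eq_Ici.symm, lintegral_const_mul' _ _ ENNReal.ofReal_ne_top,
    lintegral_Ioi_inv_sq hks, ← ENNReal.ofReal_mul (mul_nonneg hs.le (hg0 s)),
    ← ENNReal.ofReal_mul (inv_nonneg.2 hk.le)]
  congr 1
  field_simp

lemma ENNReal.abs_toReal_sub_le {p q : ℝ≥0∞} {r : ℝ} (hr : 0 ≤ r) (hq : q ≠ ⊤)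
    (hpq : p ≤ q + ENNReal.ofReal r) (hqp : q ≤ p + ENNReal.ofReal r) :
    |p.toReal - q.toReal| ≤ r := by
  have hp : p ≠ ⊤ := ne_top_of_le_ne_top (by finiteness) hpq
  have h₁ := ENNReal.toReal_mono (by finiteness) hpq
  have h₂ := ENNReal.toReal_mono (by finiteness) hqp
  rw [ENNReal.toReal_add hq ENNReal.ofReal_ne_top, ENNReal.toReal_ofReal hr] at h₁
  rw [ENNReal.toReal_add hp ENNReal.ofReal_ne_top, ENNReal.toReal_ofReal hr] at h₂
  exact abs_sub_le_iff.2 ⟨by linarith, by linarith⟩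

variable {F f : ℝ → ℝ}

lemma lintegral_Ioi_eq_of_hasDerivAt (hF : ∀ x, HasDerivAt F (f x) x) (hf_nonneg : ∀ x, 0 ≤ f x)
    {A : ℝ} (hA : Tendsto F atTop (𝓝 A)) :
    ∫⁻ s in Ioi 0, ENNReal.ofReal (f s) = ENNReal.ofReal (A - F 0) := by
  rw [← ofReal_integral_eq_lintegral_ofReal
    (integrableOn_Ioi_deriv_of_nonneg' (fun x _ => hF x) (fun x _ => hf_nonneg x) hA)
    (ae_of_all _ hf_nonneg),
    integral_Ioi_of_hasDerivAt_of_nonneg' (fun x _ => hF x) (fun x _ => hf_nonneg x) hA]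

lemma apply_le_apply_zero (hf_even : ∀ x, f (-x) = f x) (hf_anti : AntitoneOn f (Ici 0))
    (x : ℝ) : f x ≤ f 0 := by
  rcases le_total 0 x with hx | hx
  · exact hf_anti self_mem_Ici hx hx
  · rw [← hf_even x]
    exact hf_anti self_mem_Ici (neg_nonneg.2 hx) (neg_nonneg.2 hx)

lemma apply_add_le_apply_sub (hf_even : ∀ x, f (-x) = f x) (hf_anti : AntitoneOn f (Ici 0))
    {t γ : ℝ} (ht : 0 ≤ t) (hγ : 0 ≤ γ) : f (t + γ) ≤ f (t - γ) := by
  have h := hf_anti (mem_Ici.2 (abs_nonneg (t - γ))) (mem_Ici.2 (add_nonneg ht hγ))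
    (abs_le.2 ⟨by linarith, by linarith⟩)
  rcases abs_cases (t - γ) with ⟨habs, -⟩ | ⟨habs, -⟩ <;> rw [habs] at h
  · exact h
  · rwa [hf_even] at h

lemma add_apply_neg_eq (hF : ∀ x, HasDerivAt F (f x) x) (hf_even : ∀ x, f (-x) = f x) (t : ℝ) :
    F t + F (-t) = 2 * F 0 := by
  have hderiv : ∀ s, HasDerivAt (fun s => F s + F (-s)) 0 s := fun s => by
    simpa [hf_even] using (hF s).fun_add ((hF (-s)).comp s (hasDerivAt_neg s))
  have := is_const_of_deriv_eq_zero (fun s => (hderiv s).differentiableAt)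
    (fun s => (hderiv s).deriv) t 0
  simpa [two_mul] using this

lemma shift_diff_eq_integral (hF : ∀ x, HasDerivAt F (f x) x) (hf : Continuous f) (x y γ : ℝ) :
    F (y - γ) - F (y + γ) - F (x - γ) + F (x + γ) = ∫ t in x..y, (f (t - γ) - f (t + γ)) := by
  rw [intervalIntegral.integral_eq_sub_of_hasDerivAt (f := fun t => F (t - γ) - F (t + γ))
    (fun t _ => ((hF _).comp_sub_const t γ).sub ((hF _).comp_add_const t γ))
    ((by fun_prop : Continuous fun t => f (t - γ) - f (t + γ)).intervalIntegrable _ _)]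
  ring

lemma shift_diff_nonneg (hF : ∀ x, HasDerivAt F (f x) x) (hf : Continuous f)
    (hf_even : ∀ x, f (-x) = f x) (hf_anti : AntitoneOn f (Ici 0)) {x y γ : ℝ} (hx : 0 ≤ x)
    (hxy : x ≤ y) (hγ : 0 ≤ γ) : 0 ≤ F (y - γ) - F (y + γ) - F (x - γ) + F (x + γ) := by
  rw [shift_diff_eq_integral hF hf]
  exact intervalIntegral.integral_nonneg hxy fun t ht =>
    sub_nonneg.2 (apply_add_le_apply_sub hf_even hf_anti (hx.trans ht.1) hγ)

noncomputable def hilbertKernel (f : ℝ → ℝ) (t γ : ℝ) : ℝ≥0∞ :=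
  ENNReal.ofReal ((f (t - γ) - f (t + γ)) / γ)

noncomputable def averageKernel (f : ℝ → ℝ) (t γ : ℝ) : ℝ≥0∞ :=
  (Ioc 0 (2 * t)).indicator (fun γ => ENNReal.ofReal (f (t - γ) / t)) γ

noncomputable def farKernel (f : ℝ → ℝ) (t γ : ℝ) : ℝ≥0∞ :=
  (Ioc 0 (γ / 2)).indicator (fun t => ENNReal.ofReal (f (γ - t) / γ)) t

noncomputable def nearKernel (f : ℝ → ℝ) (t γ : ℝ) : ℝ≥0∞ :=
  (Ici (2 * γ)).indicator (fun t => ENNReal.ofReal ((f (t - γ) - f (t + γ)) / γ)) t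

noncomputable def midKernel (f : ℝ → ℝ) (t γ : ℝ) : ℝ≥0∞ :=
  (Ioc (t / 2) t).indicator (fun γ => ENNReal.ofReal (2 * (t - γ) * f (t - γ) / t ^ 2)) γ

noncomputable def forwardKernel (f : ℝ → ℝ) (t γ : ℝ) : ℝ≥0∞ :=
  (Ioc 0 (2 * t)).indicator (fun γ => ENNReal.ofReal (f (t + γ) / t)) γ

noncomputable def reflectedKernel (f : ℝ → ℝ) (t γ : ℝ) : ℝ≥0∞ :=
  (Ioc t (2 * t)).indicator (fun γ => ENNReal.ofReal ((γ - t) * f (γ - t) / t ^ 2)) γ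

lemma measurable_hilbertKernel (hf : Continuous f) :
    Measurable (Function.uncurry (hilbertKernel f)) := by
  unfold hilbertKernel
  fun_prop

lemma measurable_averageKernel (hf : Continuous f) :
    Measurable (Function.uncurry (averageKernel f)) := by
  simp only [Function.uncurry_def, averageKernel, indicator_apply, mem_Ioc]
  exact Measurable.ite (by measurability) (by fun_prop) measurable_const

lemma measurable_farKernel (hf : Continuous f) : Measurable (Function.uncurry (farKernel f)) := by
  simp only [Function.uncurry_def, farKernel, indicator_apply, mem_Ioc]
  exact Measurable.ite (by measurability) (by fun_prop) measurable_const

lemma measurable_nearKernel (hf : Continuous f) :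
    Measurable (Function.uncurry (nearKernel f)) := by
  simp only [Function.uncurry_def, nearKernel, indicator_apply, mem_Ici]
  exact Measurable.ite (by measurability) (by fun_prop) measurable_const

lemma measurable_forwardKernel (hf : Continuous f) :
    Measurable (Function.uncurry (forwardKernel f)) := by
  simp only [Function.uncurry_def, forwardKernel, indicator_apply, mem_Ioc]
  exact Measurable.ite (by measurability) (by fun_prop) measurable_const

lemma hilbertKernel_le (hf_nonneg : ∀ x, 0 ≤ f x) (hf_even : ∀ x, f (-x) = f x) {t γ : ℝ}
    (ht : 0 < t) (hγ : 0 < γ) :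
    hilbertKernel f t γ ≤
      averageKernel f t γ + (farKernel f t γ + nearKernel f t γ + midKernel f t γ) := by
  have hu : (f (t - γ) - f (t + γ)) / γ ≤ f (t - γ) / γ := by
    gcongr; linarith [hf_nonneg (t + γ)]
  have hsymm : f (t - γ) = f (γ - t) := by rw [← neg_sub, hf_even]
  rw [hilbertKernel, averageKernel, farKernel, nearKernel, midKernel]
  rcases le_or_gt (2 * t) γ with hfar | hγ2t
  · rw [indicator_of_mem (show t ∈ Ioc 0 (γ / 2) from ⟨ht, by linarith⟩)]
    exact le_add_left (le_add_right (le_add_right (ENNReal.ofReal_le_ofReal (hsymm ▸ hu))))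
  rcases le_or_gt (2 * γ) t with hnear | hmid
  · rw [indicator_of_mem (show t ∈ Ici (2 * γ) from hnear)]
    exact le_add_left (le_add_right le_add_self)
  rw [indicator_of_mem (show γ ∈ Ioc 0 (2 * t) from ⟨hγ, hγ2t.le⟩)]
  rcases le_or_gt γ t with hγt | htγ
  · rw [indicator_of_mem (show γ ∈ Ioc (t / 2) t from ⟨by linarith, hγt⟩)]
    refine (ENNReal.ofReal_le_ofReal (hu.trans ?_)).trans
      (ENNReal.ofReal_add_le.trans (add_le_add le_rfl le_add_self))
    have hweight : 1 / γ ≤ 1 / t + 2 * (t - γ) / t ^ 2 := by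
      rw [div_add_div _ _ ht.ne' (by positivity), div_le_div_iff₀ hγ (by positivity)]
      nlinarith [mul_nonneg (mul_nonneg ht.le (sub_nonneg.2 hγt)) (sub_nonneg.2 hmid.le)]
    calc f (t - γ) / γ = f (t - γ) * (1 / γ) := by ring
      _ ≤ f (t - γ) * (1 / t + 2 * (t - γ) / t ^ 2) := by gcongr; exact hf_nonneg _
      _ = f (t - γ) / t + 2 * (t - γ) * f (t - γ) / t ^ 2 := by ring
  · exact le_add_right (ENNReal.ofReal_le_ofReal
      (hu.trans (div_le_div_of_nonneg_left (hf_nonneg _) ht htγ.le)))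

lemma averageKernel_le (hf_nonneg : ∀ x, 0 ≤ f x) (hf_even : ∀ x, f (-x) = f x)
    (hf_anti : AntitoneOn f (Ici 0)) {t γ : ℝ} (ht : 0 < t) (hγ : 0 < γ) :
    averageKernel f t γ ≤
      hilbertKernel f t γ + (forwardKernel f t γ + reflectedKernel f t γ) := by
  have hpair := apply_add_le_apply_sub hf_even hf_anti ht.le hγ.le
  have hsymm : f (t - γ) = f (γ - t) := by rw [← neg_sub, hf_even]
  rw [hilbertKernel, averageKernel, forwardKernel, reflectedKernel]
  rcases le_or_gt γ (2 * t) with hγ2t | hfar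
  swap
  · rw [indicator_of_notMem fun h => (h.2.trans_lt hfar).false]
    exact zero_le
  rw [indicator_of_mem (show γ ∈ Ioc 0 (2 * t) from ⟨hγ, hγ2t⟩),
    indicator_of_mem (show γ ∈ Ioc 0 (2 * t) from ⟨hγ, hγ2t⟩)]
  rcases le_or_gt γ t with hγt | htγ
  · refine (ENNReal.ofReal_le_ofReal ?_).trans
      (ENNReal.ofReal_add_le.trans (add_le_add le_rfl le_self_add))
    have := div_le_div_of_nonneg_left (sub_nonneg.2 hpair) hγ hγt
    linarith [sub_div (f (t - γ)) (f (t + γ)) t]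
  · rw [indicator_of_mem (show γ ∈ Ioc t (2 * t) from ⟨htγ, hγ2t⟩), ← add_assoc]
    refine (ENNReal.ofReal_le_ofReal ?_).trans
      (ENNReal.ofReal_add_le.trans (add_le_add ENNReal.ofReal_add_le le_rfl))
    have h1 := div_le_div_of_nonneg_left (hf_nonneg (t + γ)) ht htγ.le
    have h2 : f (γ - t) / t - f (γ - t) / γ ≤ (γ - t) * f (γ - t) / t ^ 2 := by
      rw [div_sub_div _ _ ht.ne' hγ.ne', div_le_div_iff₀ (by positivity) (by positivity)]
      nlinarith [mul_nonneg (mul_nonneg (sub_nonneg.2 htγ.le) (sub_nonneg.2 htγ.le))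
        (mul_nonneg ht.le (hf_nonneg (γ - t))), mul_nonneg ht.le (hf_nonneg (γ - t)), mul_pos ht hγ]
    rw [hsymm, sub_div]
    linarith

lemma lintegral_farKernel (hF : ∀ x, HasDerivAt F (f x) x) (hf : Continuous f)
    (hf_nonneg : ∀ x, 0 ≤ f x) {A : ℝ} (hA : Tendsto F atTop (𝓝 A)) :
    ∫⁻ t in Ioi 0, ∫⁻ γ in Ioi 0, farKernel f t γ = ENNReal.ofReal (log 2 * (A - F 0)) := by
  rw [lintegral_lintegral_swap (measurable_farKernel hf).aemeasurable]
  have hinner : ∀ γ ∈ Ioi (0 : ℝ), ∫⁻ t in Ioi 0, farKernel f t γ =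
      ENNReal.ofReal ((F (1 * γ) - F (2⁻¹ * γ)) / γ) := fun γ (hγ : 0 < γ) => by
    simp only [farKernel]
    rw [lintegral_Ioi_indicator_Ioc (by fun_prop) le_rfl (by positivity)
      fun t _ => div_nonneg (hf_nonneg _) hγ.le, intervalIntegral.integral_div,
      intervalIntegral.integral_comp_sub_left f γ,
      intervalIntegral.integral_eq_sub_of_hasDerivAt (fun s _ => hF s) (hf.intervalIntegrable _ _)]
    ring_nf
  rw [setLIntegral_congr_fun measurableSet_Ioi hinner,
    lintegral_Ioi_frullani (Differentiable.continuous fun x => (hF x).differentiableAt)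
      (monotone_of_hasDerivAt_nonneg hF hf_nonneg) hA (by norm_num) (by norm_num)]
  norm_num

lemma lintegral_nearKernel (hF : ∀ x, HasDerivAt F (f x) x) (hf : Continuous f)
    (hf_nonneg : ∀ x, 0 ≤ f x) (hf_even : ∀ x, f (-x) = f x) (hf_anti : AntitoneOn f (Ici 0))
    {A : ℝ} (hA : Tendsto F atTop (𝓝 A)) :
    ∫⁻ t in Ioi 0, ∫⁻ γ in Ioi 0, nearKernel f t γ = ENNReal.ofReal (log 3 * (A - F 0)) := by
  rw [lintegral_lintegral_swap (measurable_nearKernel hf).aemeasurable]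
  have hinner : ∀ γ ∈ Ioi (0 : ℝ), ∫⁻ t in Ioi 0, nearKernel f t γ =
      ENNReal.ofReal ((F (3 * γ) - F (1 * γ)) / γ) := fun γ (hγ : 0 < γ) => by
    have hderiv : ∀ t ∈ Ici (2 * γ), HasDerivAt (fun t => (F (t - γ) - F (t + γ)) / γ)
        ((f (t - γ) - f (t + γ)) / γ) t := fun t _ =>
      (((hF _).comp_sub_const t γ).sub ((hF _).comp_add_const t γ)).div_const γ
    have hpos : ∀ t ∈ Ioi (2 * γ), 0 ≤ (f (t - γ) - f (t + γ)) / γ := fun t (ht : 2 * γ < t) =>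
      div_nonneg (sub_nonneg.2 (apply_add_le_apply_sub hf_even hf_anti (by linarith) hγ.le))
        hγ.le
    have hlim : Tendsto (fun t => (F (t - γ) - F (t + γ)) / γ) atTop (𝓝 ((A - A) / γ)) :=
      ((hA.comp (tendsto_atTop_add_const_right _ _ tendsto_id)).sub
        (hA.comp (tendsto_atTop_add_const_right _ _ tendsto_id))).div_const γ
    simp only [nearKernel]
    rw [lintegral_indicator measurableSet_Ici,
      Measure.restrict_restrict measurableSet_Ici,
      inter_eq_left.2 (Ici_subset_Ioi.2 (by positivity)), setLIntegral_congr Ioi_ae_eq_Ici.symm,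
      ← ofReal_integral_eq_lintegral_ofReal (integrableOn_Ioi_deriv_of_nonneg' hderiv hpos hlim)
        ((ae_restrict_iff' measurableSet_Ioi).2 (ae_of_all _ hpos)),
      integral_Ioi_of_hasDerivAt_of_nonneg' hderiv hpos hlim]
    ring_nf
  rw [setLIntegral_congr_fun measurableSet_Ioi hinner,
    lintegral_Ioi_frullani (Differentiable.continuous fun x => (hF x).differentiableAt)
      (monotone_of_hasDerivAt_nonneg hF hf_nonneg) hA (by norm_num) (by norm_num)]
  norm_num

lemma lintegral_midKernel (hF : ∀ x, HasDerivAt F (f x) x) (hf : Continuous f)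
    (hf_nonneg : ∀ x, 0 ≤ f x) {A : ℝ} (hA : Tendsto F atTop (𝓝 A)) :
    ∫⁻ t in Ioi 0, ∫⁻ γ in Ioi 0, midKernel f t γ = ENNReal.ofReal (A - F 0) := by
  have hinner : ∀ t ∈ Ioi (0 : ℝ), ∫⁻ γ in Ioi 0, midKernel f t γ =
      ENNReal.ofReal 2 * ENNReal.ofReal ((∫ s in 0..t / 2, s * f s) / t ^ 2) :=
    fun t (ht : 0 < t) => by
      simp only [midKernel]
      rw [lintegral_Ioi_indicator_Ioc (by fun_prop) (by positivity) (by linarith)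
        fun γ hγ => div_nonneg (mul_nonneg (mul_nonneg zero_le_two (by linarith [hγ.2]))
          (hf_nonneg _)) (sq_nonneg t), ← ENNReal.ofReal_mul zero_le_two]
      congr 1
      rw [intervalIntegral.integral_div]
      simp_rw [mul_assoc (2 : ℝ)]
      rw [intervalIntegral.integral_const_mul,
        intervalIntegral.integral_comp_sub_left (fun s => s * f s) t]
      ring_nf
  rw [setLIntegral_congr_fun measurableSet_Ioi hinner,
    lintegral_const_mul' _ _ ENNReal.ofReal_ne_top, lintegral_Ioi_hardy hf hf_nonneg two_pos, lintegral_Ioi_eq_of_hasDerivAt hF hf_nonneg hA,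
    ← mul_assoc, ← ENNReal.ofReal_mul zero_le_two]
  norm_num

lemma lintegral_forwardKernel (hF : ∀ x, HasDerivAt F (f x) x) (hf : Continuous f)
    (hf_nonneg : ∀ x, 0 ≤ f x) {A : ℝ} (hA : Tendsto F atTop (𝓝 A)) :
    ∫⁻ t in Ioi 0, ∫⁻ γ in Ioi 0, forwardKernel f t γ = ENNReal.ofReal (log 3 * (A - F 0)) := by
  have hinner : ∀ t ∈ Ioi (0 : ℝ), ∫⁻ γ in Ioi 0, forwardKernel f t γ =
      ENNReal.ofReal ((F (3 * t) - F (1 * t)) / t) := fun t (ht : 0 < t) => by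
    simp only [forwardKernel]
    rw [lintegral_Ioi_indicator_Ioc (by fun_prop) le_rfl (by positivity)
      fun γ _ => div_nonneg (hf_nonneg _) ht.le, intervalIntegral.integral_div,
      intervalIntegral.integral_comp_add_left f t,
      intervalIntegral.integral_eq_sub_of_hasDerivAt (fun s _ => hF s) (hf.intervalIntegrable _ _)]
    ring_nf
  rw [setLIntegral_congr_fun measurableSet_Ioi hinner,
    lintegral_Ioi_frullani (Differentiable.continuous fun x => (hF x).differentiableAt)
      (monotone_of_hasDerivAt_nonneg hF hf_nonneg) hA (by norm_num) (by norm_num)]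
  norm_num

lemma lintegral_reflectedKernel (hF : ∀ x, HasDerivAt F (f x) x) (hf : Continuous f)
    (hf_nonneg : ∀ x, 0 ≤ f x) {A : ℝ} (hA : Tendsto F atTop (𝓝 A)) :
    ∫⁻ t in Ioi 0, ∫⁻ γ in Ioi 0, reflectedKernel f t γ = ENNReal.ofReal (A - F 0) := by
  have hinner : ∀ t ∈ Ioi (0 : ℝ), ∫⁻ γ in Ioi 0, reflectedKernel f t γ =
      ENNReal.ofReal ((∫ s in 0..t / 1, s * f s) / t ^ 2) := fun t (ht : 0 < t) => by
    simp only [reflectedKernel]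
    rw [lintegral_Ioi_indicator_Ioc (by fun_prop) ht.le (by linarith)
      fun γ hγ => div_nonneg (mul_nonneg (by linarith [hγ.1]) (hf_nonneg _)) (sq_nonneg t),
      intervalIntegral.integral_div,
      intervalIntegral.integral_comp_sub_right (fun s => s * f s) t]
    ring_nf
  rw [setLIntegral_congr_fun measurableSet_Ioi hinner, lintegral_Ioi_hardy hf hf_nonneg one_pos,
    lintegral_Ioi_eq_of_hasDerivAt hF hf_nonneg hA]
  norm_num

lemma lintegral_hilbertKernel_le (hF : ∀ x, HasDerivAt F (f x) x) (hf : Continuous f)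
    (hf_nonneg : ∀ x, 0 ≤ f x) (hf_even : ∀ x, f (-x) = f x) (hf_anti : AntitoneOn f (Ici 0))
    {A : ℝ} (hA : Tendsto F atTop (𝓝 A)) {s : Set ℝ} (hs : MeasurableSet s) (hs0 : s ⊆ Ioi 0) :
    ∫⁻ t in s, ∫⁻ γ in Ioi 0, hilbertKernel f t γ ≤
      (∫⁻ t in s, ∫⁻ γ in Ioi 0, averageKernel f t γ) + ENNReal.ofReal (4 * (A - F 0)) := by
  have hc : 0 ≤ A - F 0 :=
    sub_nonneg.2 ((monotone_of_hasDerivAt_nonneg hF hf_nonneg).ge_of_tendsto hA 0)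
  calc ∫⁻ t in s, ∫⁻ γ in Ioi 0, hilbertKernel f t γ
      ≤ ∫⁻ t in s, ∫⁻ γ in Ioi 0, (averageKernel f t γ +
          (farKernel f t γ + nearKernel f t γ + midKernel f t γ)) :=
        setLIntegral_mono' hs fun t ht => setLIntegral_mono' measurableSet_Ioi fun γ hγ =>
          hilbertKernel_le hf_nonneg hf_even (hs0 ht) hγ
    _ ≤ (∫⁻ t in s, ∫⁻ γ in Ioi 0, averageKernel f t γ) +
          ∫⁻ t in Ioi 0, ∫⁻ γ in Ioi 0, (farKernel f t γ + nearKernel f t γ + midKernel f t γ) := by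
        rw [lintegral_lintegral_add (measurable_averageKernel hf)]
        exact add_le_add le_rfl (lintegral_mono_set hs0)
    _ = (∫⁻ t in s, ∫⁻ γ in Ioi 0, averageKernel f t γ) + (ENNReal.ofReal (log 2 * (A - F 0)) +
          ENNReal.ofReal (log 3 * (A - F 0)) + ENNReal.ofReal (A - F 0)) := by
        rw [lintegral_lintegral_add (g := fun t γ => farKernel f t γ + nearKernel f t γ)
            ((measurable_farKernel hf).add (measurable_nearKernel hf)),
          lintegral_lintegral_add (measurable_farKernel hf), lintegral_farKernel hF hf hf_nonneg hA,
          lintegral_nearKernel hF hf hf_nonneg hf_even hf_anti hA,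
          lintegral_midKernel hF hf hf_nonneg hA]
    _ ≤ _ := by
        gcongr
        rw [← ENNReal.ofReal_add (mul_nonneg (log_nonneg one_le_two) hc)
            (mul_nonneg (log_nonneg (by norm_num)) hc),
          ← ENNReal.ofReal_add (by positivity) hc]
        have hlog2 := log_le_sub_one_of_pos (by norm_num : (0 : ℝ) < 2)
        have hlog3 := log_le_sub_one_of_pos (by norm_num : (0 : ℝ) < 3)
        exact ENNReal.ofReal_le_ofReal (by nlinarith)

lemma lintegral_averageKernel_le (hF : ∀ x, HasDerivAt F (f x) x) (hf : Continuous f)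
    (hf_nonneg : ∀ x, 0 ≤ f x) (hf_even : ∀ x, f (-x) = f x) (hf_anti : AntitoneOn f (Ici 0))
    {A : ℝ} (hA : Tendsto F atTop (𝓝 A)) {s : Set ℝ} (hs : MeasurableSet s) (hs0 : s ⊆ Ioi 0) :
    ∫⁻ t in s, ∫⁻ γ in Ioi 0, averageKernel f t γ ≤
      (∫⁻ t in s, ∫⁻ γ in Ioi 0, hilbertKernel f t γ) + ENNReal.ofReal (4 * (A - F 0)) := by
  have hc : 0 ≤ A - F 0 :=
    sub_nonneg.2 ((monotone_of_hasDerivAt_nonneg hF hf_nonneg).ge_of_tendsto hA 0)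
  calc ∫⁻ t in s, ∫⁻ γ in Ioi 0, averageKernel f t γ
      ≤ ∫⁻ t in s, ∫⁻ γ in Ioi 0, (hilbertKernel f t γ +
          (forwardKernel f t γ + reflectedKernel f t γ)) :=
        setLIntegral_mono' hs fun t ht => setLIntegral_mono' measurableSet_Ioi fun γ hγ =>
          averageKernel_le hf_nonneg hf_even hf_anti (hs0 ht) hγ
    _ ≤ (∫⁻ t in s, ∫⁻ γ in Ioi 0, hilbertKernel f t γ) +
          ∫⁻ t in Ioi 0, ∫⁻ γ in Ioi 0, (forwardKernel f t γ + reflectedKernel f t γ) := by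
        rw [lintegral_lintegral_add (measurable_hilbertKernel hf)]
        exact add_le_add le_rfl (lintegral_mono_set hs0)
    _ = (∫⁻ t in s, ∫⁻ γ in Ioi 0, hilbertKernel f t γ) +
          (ENNReal.ofReal (log 3 * (A - F 0)) + ENNReal.ofReal (A - F 0)) := by
        rw [lintegral_lintegral_add (measurable_forwardKernel hf),
          lintegral_forwardKernel hF hf hf_nonneg hA, lintegral_reflectedKernel hF hf hf_nonneg hA]
    _ ≤ _ := by
        gcongr
        rw [← ENNReal.ofReal_add (mul_nonneg (log_nonneg (by norm_num)) hc) hc]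
        have hlog3 := log_le_sub_one_of_pos (by norm_num : (0 : ℝ) < 3)
        exact ENNReal.ofReal_le_ofReal (by nlinarith)

lemma lintegral_averageKernel (hF : ∀ x, HasDerivAt F (f x) x) (hf : Continuous f)
    (hf_nonneg : ∀ x, 0 ≤ f x) {t : ℝ} (ht : 0 < t) :
    ∫⁻ γ in Ioi 0, averageKernel f t γ = ENNReal.ofReal ((F t - F (-t)) / t) := by
  simp only [averageKernel]
  rw [lintegral_Ioi_indicator_Ioc (by fun_prop) le_rfl (by positivity)
    fun γ _ => div_nonneg (hf_nonneg _) ht.le, intervalIntegral.integral_div,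
    intervalIntegral.integral_comp_sub_left f t,
    intervalIntegral.integral_eq_sub_of_hasDerivAt (fun s _ => hF s) (hf.intervalIntegrable _ _)]
  ring_nf

lemma lintegral_averageKernel_ne_top (hF : ∀ x, HasDerivAt F (f x) x)
    (hf : Continuous f) (hf_nonneg : ∀ x, 0 ≤ f x) (hf_even : ∀ x, f (-x) = f x)
    (hf_anti : AntitoneOn f (Ici 0)) {x y : ℝ} (hx : 0 ≤ x) :
    ∫⁻ t in Ioo x y, ∫⁻ γ in Ioi 0, averageKernel f t γ ≠ ⊤ := by
  have hbound : ∀ t ∈ Ioo x y, ∫⁻ γ in Ioi 0, averageKernel f t γ ≤ ENNReal.ofReal (2 * f 0) :=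
    fun t ht => by
      have ht0 : 0 < t := hx.trans_lt ht.1
      have hlip := image_sub_le_mul_sub_of_deriv_le (fun x => (hF x).differentiableAt)
        (fun x => ((hF x).deriv).trans_le (apply_le_apply_zero hf_even hf_anti x))
        (neg_le_self ht0.le)
      rw [lintegral_averageKernel hF hf hf_nonneg ht0]
      exact ENNReal.ofReal_le_ofReal ((div_le_iff₀ ht0).2 (by linarith))
  refine ne_top_of_le_ne_top ?_ (setLIntegral_mono' measurableSet_Ioo hbound)
  rw [setLIntegral_const, Real.volume_Ioo]
  finiteness

lemma integral_sub_neg_div_eq_toReal (hF : ∀ x, HasDerivAt F (f x) x) (hf : Continuous f)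
    (hf_nonneg : ∀ x, 0 ≤ f x) {x y : ℝ} (hx : 0 ≤ x) (hxy : x ≤ y) :
    ∫ t in x..y, (F t - F (-t)) / t =
      (∫⁻ t in Ioo x y, ∫⁻ γ in Ioi 0, averageKernel f t γ).toReal := by
  have hFc : Continuous F := Differentiable.continuous fun x => (hF x).differentiableAt
  have hnn : ∀ t ∈ Ioo x y, 0 ≤ (F t - F (-t)) / t := fun t ht =>
    div_nonneg (sub_nonneg.2 (monotone_of_hasDerivAt_nonneg hF hf_nonneg (by linarith [ht.1])))
      (by linarith [ht.1])
  rw [intervalIntegral.integral_of_le hxy, integral_Ioc_eq_integral_Ioo,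
    integral_eq_lintegral_of_nonneg_ae ((ae_restrict_iff' measurableSet_Ioo).2 (ae_of_all _ hnn))
      (by fun_prop : Measurable fun t => (F t - F (-t)) / t).aestronglyMeasurable,
    setLIntegral_congr_fun measurableSet_Ioo
      fun t ht => (lintegral_averageKernel hF hf hf_nonneg (hx.trans_lt ht.1)).symm]

lemma integral_shift_diff_div_eq_toReal (hF : ∀ x, HasDerivAt F (f x) x) (hf : Continuous f)
    (hf_even : ∀ x, f (-x) = f x) (hf_anti : AntitoneOn f (Ici 0)) {x y : ℝ} (hx : 0 ≤ x)
    (hxy : x ≤ y) :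
    ∫ γ in Ioi 0, (F (y - γ) - F (y + γ) - F (x - γ) + F (x + γ)) / γ =
      (∫⁻ t in Ioo x y, ∫⁻ γ in Ioi 0, hilbertKernel f t γ).toReal := by
  have hFc : Continuous F := Differentiable.continuous fun x => (hF x).differentiableAt
  have hnn : ∀ γ ∈ Ioi (0 : ℝ), 0 ≤ (F (y - γ) - F (y + γ) - F (x - γ) + F (x + γ)) / γ :=
    fun γ (hγ : 0 < γ) =>
      div_nonneg (shift_diff_nonneg hF hf hf_even hf_anti hx hxy hγ.le) hγ.le
  have hinner : ∀ γ ∈ Ioi (0 : ℝ),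
      ENNReal.ofReal ((F (y - γ) - F (y + γ) - F (x - γ) + F (x + γ)) / γ) =
        ∫⁻ t in Ioo x y, hilbertKernel f t γ := fun γ (hγ : 0 < γ) => by
    rw [shift_diff_eq_integral hF hf, ← intervalIntegral.integral_div,
      intervalIntegral.integral_of_le hxy,
      ofReal_integral_eq_lintegral_ofReal
        (by fun_prop : Continuous fun t => (f (t - γ) - f (t + γ)) / γ).integrableOn_Ioc
        ((ae_restrict_iff' measurableSet_Ioc).2 (ae_of_all _ fun t ht => div_nonneg
          (sub_nonneg.2 (apply_add_le_apply_sub hf_even hf_anti (hx.trans ht.1.le) hγ.le))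
          hγ.le)),
      setLIntegral_congr Ioo_ae_eq_Ioc.symm]
    rfl
  rw [integral_eq_lintegral_of_nonneg_ae ((ae_restrict_iff' measurableSet_Ioi).2 (ae_of_all _ hnn))
      (by fun_prop : Measurable fun γ =>
        (F (y - γ) - F (y + γ) - F (x - γ) + F (x + γ)) / γ).aestronglyMeasurable,
    setLIntegral_congr_fun measurableSet_Ioi hinner,
    lintegral_lintegral_swap (f := fun γ t => hilbertKernel f t γ)
      ((measurable_hilbertKernel hf).comp measurable_swap).aemeasurable]

lemma DF_zero_neg (hF : ∀ x, HasDerivAt F (f x) x) (hf_even : ∀ x, f (-x) = f x) (x : ℝ) :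
    DF F 0 x = DF F 0 (-x) := by
  unfold DF
  congr 1
  refine integral_congr_ae (ae_of_all _ fun γ => ?_)
  dsimp only
  rw [show -x - γ = -(x + γ) by ring, show -x + γ = -(x - γ) by ring]
  congr 1
  linarith [add_apply_neg_eq hF hf_even (x + γ), add_apply_neg_eq hF hf_even (x - γ)]

lemma DF_nonneg (hF : ∀ x, HasDerivAt F (f x) x) (hf : Continuous f)
    (hf_even : ∀ x, f (-x) = f x) (hf_anti : AntitoneOn f (Ici 0)) {x y : ℝ} (hx : 0 ≤ x)
    (hxy : x ≤ y) : 0 ≤ DF F x y :=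
  mul_nonneg (by positivity) (setIntegral_nonneg measurableSet_Ioi fun γ (hγ : 0 < γ) =>
    div_nonneg (shift_diff_nonneg hF hf hf_even hf_anti hx hxy hγ.le) hγ.le)

theorem abs_pi_mul_DF_sub_integral_le (hF : ∀ x, HasDerivAt F (f x) x) (hf : Continuous f)
    (hf_nonneg : ∀ x, 0 ≤ f x) (hf_even : ∀ x, f (-x) = f x) (hf_anti : AntitoneOn f (Ici 0))
    {A : ℝ} (hA : Tendsto F atTop (𝓝 A)) {x y : ℝ} (hx : 0 ≤ x) (hxy : x ≤ y) :
    |π * DF F x y - ∫ t in x..y, (F t - F (-t)) / t| ≤ 4 * (A - F 0) := by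
  have hs0 : Ioo x y ⊆ Ioi 0 := fun t ht => hx.trans_lt ht.1
  rw [DF, ← mul_assoc, mul_one_div_cancel pi_ne_zero, one_mul,
    integral_shift_diff_div_eq_toReal hF hf hf_even hf_anti hx hxy,
    integral_sub_neg_div_eq_toReal hF hf hf_nonneg hx hxy]
  exact ENNReal.abs_toReal_sub_le
    (by linarith [(monotone_of_hasDerivAt_nonneg hF hf_nonneg).ge_of_tendsto hA 0])
    (lintegral_averageKernel_ne_top hF hf hf_nonneg hf_even hf_anti hx)
    (lintegral_hilbertKernel_le hF hf hf_nonneg hf_even hf_anti hA measurableSet_Ioo hs0)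
    (lintegral_averageKernel_le hF hf hf_nonneg hf_even hf_anti hA measurableSet_Ioo hs0)

theorem statement13_general (μ ν : ℝ)
    (𝔉 𝔉' : ℝ → ℝ) (hderiv : ∀ x : ℝ, HasDerivAt 𝔉 (𝔉' x) x) (hcont : Continuous 𝔉')
    (heven : ∀ x : ℝ, 𝔉' (-x) = 𝔉' x) (hnonneg : ∀ x : ℝ, 0 ≤ 𝔉' x)
    (hdec : AntitoneOn 𝔉' (Set.Ici (0 : ℝ)))
    (a b : ℝ) (ha : Filter.Tendsto 𝔉 Filter.atTop (nhds a))
    (hb : Filter.Tendsto 𝔉 Filter.atBot (nhds b))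
    (hab : a - b = (μ - ν) * Real.pi) :
    (∀ x : ℝ, DF 𝔉 0 x = DF 𝔉 0 (-x)) ∧
    (∀ x y : ℝ, 0 ≤ x → x < y → 0 ≤ DF 𝔉 x y) ∧
    (∀ x y : ℝ, 0 ≤ x → x < y →
      ∃ R : ℝ, DF 𝔉 x y = (1 / Real.pi) * (∫ γ in x..y, (𝔉 γ - 𝔉 (-γ)) / γ) + R ∧
        -2 * (μ - ν) ≤ R ∧ R ≤ 2 * (μ - ν)) := by
  have hb_eq : b = 2 * 𝔉 0 - a := by
    refine tendsto_nhds_unique hb ((tendsto_const_nhds.sub (ha.comp tendsto_neg_atBot_atTop)).congr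
      fun t => ?_)
    rw [Function.comp_apply]
    linarith [add_apply_neg_eq hderiv heven t]
  refine ⟨DF_zero_neg hderiv heven, fun x y hx hxy => DF_nonneg hderiv hcont heven hdec hx hxy.le,
    fun x y hx hxy => ⟨DF 𝔉 x y - (1 / π) * ∫ γ in x..y, (𝔉 γ - 𝔉 (-γ)) / γ, by ring, ?_⟩⟩
  have hbound := abs_pi_mul_DF_sub_integral_le hderiv hcont hnonneg heven hdec ha hx hxy.le
  rw [show 4 * (a - 𝔉 0) = 2 * (μ - ν) * π by rw [hb_eq] at hab; linarith, abs_le] at hbound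
  rw [show DF 𝔉 x y - 1 / π * ∫ γ in x..y, (𝔉 γ - 𝔉 (-γ)) / γ =
      (π * DF 𝔉 x y - ∫ γ in x..y, (𝔉 γ - 𝔉 (-γ)) / γ) / π by field_simp,
    le_div_iff₀ pi_pos, div_le_iff₀ pi_pos]
  constructor <;> linarith [hbound.1, hbound.2]

/-- Lemma 5.7: if `𝔉 ∈ C¹(ℝ)` with `𝔉'` even, nonnegative and decreasing on `[0,∞)`, and
`𝔉(+∞) − 𝔉(−∞) = (μ−ν)π`, then `x ↦ H𝔉(x) − H𝔉(0)` is even and increasing on `[0,∞)`,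
and for `y > x ≥ 0`, `H𝔉(y) − H𝔉(x) = (1/π)∫ₓʸ (𝔉(γ)−𝔉(−γ))/γ dγ + ℜ(x,y)` with
`|ℜ(x,y)| ≤ 2(μ−ν)`. -/
theorem statement13 (μ ν : ℝ) (hμ1 : 1 / 2 < μ) (hμ2 : μ ≤ 2) (hν1 : 0 < ν) (hν2 : ν < 1 / 2)
    (𝔉 𝔉' : ℝ → ℝ) (hderiv : ∀ x : ℝ, HasDerivAt 𝔉 (𝔉' x) x) (hcont : Continuous 𝔉')
    (heven : ∀ x : ℝ, 𝔉' (-x) = 𝔉' x) (hnonneg : ∀ x : ℝ, 0 ≤ 𝔉' x)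
    (hdec : AntitoneOn 𝔉' (Set.Ici (0 : ℝ)))
    (a b : ℝ) (ha : Filter.Tendsto 𝔉 Filter.atTop (nhds a))
    (hb : Filter.Tendsto 𝔉 Filter.atBot (nhds b))
    (hab : a - b = (μ - ν) * Real.pi) :
    (∀ x : ℝ, DF 𝔉 0 x = DF 𝔉 0 (-x)) ∧
    (∀ x y : ℝ, 0 ≤ x → x < y → 0 ≤ DF 𝔉 x y) ∧
    (∀ x y : ℝ, 0 ≤ x → x < y →
      ∃ R : ℝ, DF 𝔉 x y = (1 / Real.pi) * (∫ γ in x..y, (𝔉 γ - 𝔉 (-γ)) / γ) + R ∧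
        -2 * (μ - ν) ≤ R ∧ R ≤ 2 * (μ - ν)) :=
  statement13_general μ ν 𝔉 𝔉' hderiv hcont heven hnonneg hdec a b ha hb hab
end

section
/- Let 𝔉 : ℝ → ℝ be continuously differentiable, with 𝔉' even, nonnegative, and decreasing on [0,∞), and suppose the limits 𝔉(±∞) exist with 𝔉(+∞) − 𝔉(−∞) = (μ−ν)π. Then for every y > 0, 0 ≤ ∫₀^y (𝔉(y+γ) − 𝔉(y−γ))/(2γ) dγ ≤ (μ−ν)π/2. -/
open MeasureTheory Real Filter Set

/-- An estimate from the proof of Lemma 5.7: under the hypotheses of the lemma, for every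
`y > 0`, `0 ≤ ∫₀^y (𝔉(y+γ) − 𝔉(y−γ))/(2γ) dγ ≤ (μ−ν)π/2`. -/
theorem statement14 (μ ν : ℝ) (hμ1 : 1 / 2 < μ) (hμ2 : μ ≤ 2) (hν1 : 0 < ν) (hν2 : ν < 1 / 2)
    (𝔉 𝔉' : ℝ → ℝ) (hderiv : ∀ x : ℝ, HasDerivAt 𝔉 (𝔉' x) x) (hcont : Continuous 𝔉')
    (heven : ∀ x : ℝ, 𝔉' (-x) = 𝔉' x) (hnonneg : ∀ x : ℝ, 0 ≤ 𝔉' x)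
    (hdec : AntitoneOn 𝔉' (Set.Ici (0 : ℝ)))
    (a b : ℝ) (ha : Filter.Tendsto 𝔉 Filter.atTop (nhds a))
    (hb : Filter.Tendsto 𝔉 Filter.atBot (nhds b))
    (hab : a - b = (μ - ν) * Real.pi) :
    ∀ y : ℝ, 0 < y →
      0 ≤ ∫ γ in (0:ℝ)..y, (𝔉 (y + γ) - 𝔉 (y - γ)) / (2 * γ) ∧
      (∫ γ in (0:ℝ)..y, (𝔉 (y + γ) - 𝔉 (y - γ)) / (2 * γ)) ≤ (μ - ν) * Real.pi / 2 := by
  have hdiff : Differentiable ℝ 𝔉 := fun x => (hderiv x).differentiableAt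
  have hmono : Monotone 𝔉 := by
    apply monotone_of_deriv_nonneg hdiff
    intro x
    rw [(hderiv x).deriv]
    exact hnonneg x
  have hFle : ∀ x, 𝔉 x ≤ a := fun x => hmono.ge_of_tendsto ha x
  -- 𝔉 0 = (a+b)/2
  have hconst : ∀ x : ℝ, 𝔉 x + 𝔉 (-x) = 2 * 𝔉 0 := by
    have hd : ∀ x : ℝ, HasDerivAt (fun x => 𝔉 x + 𝔉 (-x)) 0 x := by
      intro x
      have h2 : HasDerivAt (fun x : ℝ => 𝔉 (-x)) (𝔉' (-x) * (-1)) x :=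
        (hderiv (-x)).comp x (hasDerivAt_neg x)
      have h3 := (hderiv x).add h2
      have : 𝔉' x + 𝔉' (-x) * (-1) = 0 := by rw [heven]; ring
      rwa [this] at h3
    have hc := is_const_of_deriv_eq_zero (f := fun x => 𝔉 x + 𝔉 (-x))
      (fun x => (hd x).differentiableAt) (fun x => (hd x).deriv)
    intro x
    have := hc x 0
    simp only [neg_zero] at this
    rw [this]; ring
  have h2F0 : 2 * 𝔉 0 = a + b := by
    have h1 : Tendsto (fun x : ℝ => 𝔉 x + 𝔉 (-x)) atTop (nhds (a + b)) :=
      ha.add (hb.comp tendsto_neg_atTop_atBot)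
    have h1' : Tendsto (fun _ : ℝ => 2 * 𝔉 0) atTop (nhds (a + b)) := by
      refine h1.congr fun x => (hconst x)
    exact (tendsto_nhds_unique tendsto_const_nhds h1')
  intro y hy
  set g : ℝ → ℝ := fun γ => (𝔉 (y + γ) - 𝔉 (y - γ)) / (2 * γ) with hg
  have hgnonneg : ∀ γ ∈ Set.Icc (0:ℝ) y, 0 ≤ g γ := by
    intro γ hγ
    apply div_nonneg
    · have : y - γ ≤ y + γ := by linarith [hγ.1]
      linarith [hmono this]
    · linarith [hγ.1]
  -- key pointwise bound
  have hkey : ∀ γ ∈ Set.Ioc (0:ℝ) y, g γ ≤ 𝔉' (y - γ) := by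
    intro γ hγ
    have hγ0 : 0 < γ := hγ.1
    have hle : y - γ ≤ y + γ := by linarith
    have hI : ∫ s in (y - γ)..(y + γ), 𝔉' s = 𝔉 (y + γ) - 𝔉 (y - γ) :=
      intervalIntegral.integral_eq_sub_of_hasDerivAt (fun x _ => hderiv x)
        (hcont.intervalIntegrable _ _)
    have hbound : ∫ s in (y - γ)..(y + γ), 𝔉' s ≤ ∫ _s in (y - γ)..(y + γ), 𝔉' (y - γ) := by
      apply intervalIntegral.integral_mono_on hle (hcont.intervalIntegrable _ _)
        (intervalIntegrable_const)
      intro s hs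
      exact hdec (by simp [Set.mem_Ici]; linarith [hγ.2, hs.1] : y - γ ∈ Set.Ici (0:ℝ))
        (by simp [Set.mem_Ici]; linarith [hγ.2, hs.1] : s ∈ Set.Ici (0:ℝ)) hs.1
    rw [intervalIntegral.integral_const, smul_eq_mul] at hbound
    rw [hI] at hbound
    rw [hg]
    rw [div_le_iff₀ (by linarith : (0:ℝ) < 2 * γ)]
    calc 𝔉 (y + γ) - 𝔉 (y - γ) ≤ (y + γ - (y - γ)) * 𝔉' (y - γ) := hbound
      _ = 𝔉' (y - γ) * (2 * γ) := by ring
  -- integrability of g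
  have hgmeas : Measurable g := by
    apply Measurable.div
    · exact ((hdiff.continuous.comp (continuous_const.add continuous_id)).sub
        (hdiff.continuous.comp (continuous_const.sub continuous_id))).measurable
    · exact (continuous_const.mul continuous_id).measurable
  have hint_g : IntervalIntegrable g volume 0 y := by
    rw [intervalIntegrable_iff_integrableOn_Ioc_of_le hy.le]
    apply Integrable.mono' (integrable_const (𝔉' 0)) hgmeas.aestronglyMeasurable.restrict
    filter_upwards [ae_restrict_mem measurableSet_Ioc] with γ hγ
    rw [Real.norm_eq_abs, abs_of_nonneg (hgnonneg γ ⟨hγ.1.le, hγ.2⟩)]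
    calc g γ ≤ 𝔉' (y - γ) := hkey γ hγ
      _ ≤ 𝔉' 0 := hdec (Set.self_mem_Ici) (by simp [Set.mem_Ici]; linarith [hγ.2] : y - γ ∈ Set.Ici (0:ℝ)) (by linarith [hγ.2])
  have hinth : IntervalIntegrable (fun γ => 𝔉' (y - γ)) volume 0 y :=
    (hcont.comp (continuous_const.sub continuous_id)).intervalIntegrable 0 y
  have h1 : (∫ γ in (0:ℝ)..y, g γ) ≤ ∫ γ in (0:ℝ)..y, 𝔉' (y - γ) := by
    apply intervalIntegral.integral_mono_on hy.le hint_g hinth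
    intro γ hγ
    rcases eq_or_lt_of_le hγ.1 with h | h
    · have : g γ = 0 := by rw [hg]; simp [← h]
      rw [this]; exact hnonneg _
    · exact hkey γ ⟨h, hγ.2⟩
  have h2 : (∫ γ in (0:ℝ)..y, 𝔉' (y - γ)) = 𝔉 y - 𝔉 0 := by
    rw [intervalIntegral.integral_comp_sub_left (fun s => 𝔉' s) y]
    simp only [sub_zero, sub_self]
    exact intervalIntegral.integral_eq_sub_of_hasDerivAt (fun x _ => hderiv x)
      (hcont.intervalIntegrable _ _)
  constructor
  · exact intervalIntegral.integral_nonneg hy.le hgnonneg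
  · calc (∫ γ in (0:ℝ)..y, g γ) ≤ 𝔉 y - 𝔉 0 := by rw [← h2]; exact h1
      _ ≤ a - (a + b) / 2 := by
          have := hFle y
          have := h2F0
          linarith
      _ = (μ - ν) * Real.pi / 2 := by rw [← hab]; ring
end

section
/- Let 1 < r < ∞ and 1 < q < ∞, and let f : ℝ → ℝ be continuously differentiable with f ∈ L^r(ℝ) and f' ∈ L^q(ℝ). Then f is bounded, lim_{x→±∞} f(x) = 0, and ‖f‖_∞ ≤ C(r,q)(‖f‖_{L^r(ℝ)} + ‖f'‖_{L^q(ℝ)}) for a constant C(r,q) depending only on r and q. -/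
/-!
By the fundamental theorem of calculus, `|f x| ≤ |f y| + ∫ₓ^{x+1} |f'|` for every
`y ∈ [x, x+1]`; averaging over `y` bounds `|f x|` by the `L¹` norms of `f` and `f'` on
`(x, x+1]`, and on this interval of length one these are dominated by the `L^r` and `L^q` norms.
The local norms are bounded by the global ones, which gives the estimate with `C = 1`, and they
tend to zero as `x → ±∞` because the `(x, x+1]`-mass of the finite measure with density `|f|^r`
(resp. `|f'|^q`) does.
-/

open MeasureTheory Real Filter Set Topology
open scoped ENNReal

theorem tendsto_measure_Ioc_add_one_cocompact (ν : Measure ℝ) [IsFiniteMeasure ν] :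
    Tendsto (fun x => ν (Ioc x (x + 1))) (cocompact ℝ) (𝓝 0) := by
  have hIic : ⋂ x : ℝ, Iic x = ∅ := iInter_eq_empty_iff.mpr fun y => ⟨y - 1, by simp⟩
  have hIoi : ⋂ x : ℝ, Ioi x = ∅ := iInter_eq_empty_iff.mpr fun y => ⟨y, lt_irrefl y⟩
  rw [cocompact_eq_atBot_atTop]
  refine Tendsto.sup ?_ ?_
  · have h := tendsto_measure_iInter_atBot (fun _ => measurableSet_Iic.nullMeasurableSet)
      monotone_Iic ⟨0, measure_ne_top ν _⟩
    rw [hIic, measure_empty] at h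
    exact tendsto_of_tendsto_of_tendsto_of_le_of_le tendsto_const_nhds
      (h.comp (tendsto_atBot_add_const_right _ 1 tendsto_id)) (fun _ => zero_le)
      fun x => measure_mono Ioc_subset_Iic_self
  · have h := tendsto_measure_iInter_atTop (fun _ => measurableSet_Ioi.nullMeasurableSet)
      antitone_Ioi ⟨0, measure_ne_top ν _⟩
    rw [hIoi, measure_empty] at h
    exact tendsto_of_tendsto_of_tendsto_of_le_of_le tendsto_const_nhds h (fun _ => zero_le)
      fun x => measure_mono Ioc_subset_Ioi_self

variable {E : Type*} [NormedAddCommGroup E]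

theorem integral_norm_le_toReal_eLpNorm {α : Type*} {m : MeasurableSpace α} {μ : Measure α}
    [IsProbabilityMeasure μ] {g : α → E} {p : ℝ≥0∞} (hp : 1 ≤ p) (hg : MemLp g p μ) :
    ∫ y, ‖g y‖ ∂μ ≤ (eLpNorm g p μ).toReal := by
  rw [integral_norm_eq_lintegral_enorm hg.1, ← eLpNorm_one_eq_lintegral_enorm]
  exact ENNReal.toReal_mono hg.eLpNorm_ne_top (eLpNorm_le_eLpNorm_of_exponent_le hp hg.1)

theorem tendsto_eLpNorm_restrict_Ioc_add_one_cocompact {g : ℝ → E} {p : ℝ≥0∞} (hp0 : p ≠ 0)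
    (hp : p ≠ ∞) (hg : MemLp g p volume) :
    Tendsto (fun x => eLpNorm g p (volume.restrict (Ioc x (x + 1)))) (cocompact ℝ) (𝓝 0) := by
  set ν := volume.withDensity fun y => ‖g y‖ₑ ^ p.toReal
  have : IsFiniteMeasure ν := isFiniteMeasure_withDensity
    (lintegral_rpow_enorm_lt_top_of_eLpNorm_lt_top hp0 hp hg.eLpNorm_lt_top).ne
  have hν (x : ℝ) :
      eLpNorm g p (volume.restrict (Ioc x (x + 1))) = ν (Ioc x (x + 1)) ^ (1 / p.toReal) := by
    rw [eLpNorm_eq_lintegral_rpow_enorm_toReal hp0 hp, withDensity_apply _ measurableSet_Ioc]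
  have hrpow := (ENNReal.continuous_rpow_const (y := 1 / p.toReal)).tendsto 0
  rw [ENNReal.zero_rpow_of_pos (one_div_pos.mpr (ENNReal.toReal_pos hp0 hp))] at hrpow
  simp only [hν]
  exact hrpow.comp (tendsto_measure_Ioc_add_one_cocompact ν)

section Derivative

variable [NormedSpace ℝ E] [CompleteSpace E] {f : ℝ → E}

theorem norm_sub_le_integral_Ioc_norm_deriv (hf : ContDiff ℝ 1 f) {x y : ℝ}
    (hy : y ∈ Icc x (x + 1)) : ‖f y - f x‖ ≤ ∫ t in Ioc x (x + 1), ‖deriv f t‖ := by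
  have hdc : Continuous (deriv f) := hf.continuous_deriv le_rfl
  rw [← intervalIntegral.integral_deriv_eq_sub
    (fun t _ => (hf.differentiable one_ne_zero).differentiableAt) (hdc.intervalIntegrable x y),
    ← intervalIntegral.integral_of_le (by linarith)]
  calc ‖∫ t in x..y, deriv f t‖ ≤ ∫ t in x..y, ‖deriv f t‖ :=
        intervalIntegral.norm_integral_le_integral_norm hy.1
    _ ≤ ∫ t in x..x + 1, ‖deriv f t‖ :=
        intervalIntegral.integral_mono_interval le_rfl hy.1 hy.2
          (Eventually.of_forall fun _ => norm_nonneg _) (hdc.norm.intervalIntegrable _ _)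

theorem norm_le_integral_Ioc_norm_add_integral_Ioc_norm_deriv (hf : ContDiff ℝ 1 f) (x : ℝ) :
    ‖f x‖ ≤ (∫ y in Ioc x (x + 1), ‖f y‖) + ∫ y in Ioc x (x + 1), ‖deriv f y‖ := by
  set A := ∫ t in Ioc x (x + 1), ‖deriv f t‖
  have hle : ∀ y ∈ Ioc x (x + 1), ‖f x‖ - A ≤ ‖f y‖ := fun y hy => by
    have := norm_sub_le_integral_Ioc_norm_deriv hf (Ioc_subset_Icc_self hy)
    linarith [norm_sub_norm_le (f x) (f y), norm_sub_rev (f x) (f y)]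
  have hint := setIntegral_mono_on (integrableOn_const (μ := volume) measure_Ioc_lt_top.ne)
    hf.continuous.norm.integrableOn_Ioc measurableSet_Ioc hle
  rw [setIntegral_const, show volume.real (Ioc x (x + 1)) = 1 by simp, one_smul] at hint
  linarith

theorem norm_le_toReal_eLpNorm_Ioc_add_toReal_eLpNorm_Ioc_deriv (hf : ContDiff ℝ 1 f)
    {r q : ℝ≥0∞} (hr : 1 ≤ r) (hq : 1 ≤ q) {x : ℝ}
    (hfr : MemLp f r (volume.restrict (Ioc x (x + 1))))
    (hfq : MemLp (deriv f) q (volume.restrict (Ioc x (x + 1)))) :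
    ‖f x‖ ≤ (eLpNorm f r (volume.restrict (Ioc x (x + 1)))).toReal +
      (eLpNorm (deriv f) q (volume.restrict (Ioc x (x + 1)))).toReal := by
  have : IsProbabilityMeasure (volume.restrict (Ioc x (x + 1))) := ⟨by simp⟩
  exact (norm_le_integral_Ioc_norm_add_integral_Ioc_norm_deriv hf x).trans
    (add_le_add (integral_norm_le_toReal_eLpNorm hr hfr) (integral_norm_le_toReal_eLpNorm hq hfq))

end Derivative

/-- Sobolev-type embedding used in the proof of Proposition 5.6: if `f ∈ C¹(ℝ)` with
`f ∈ L^r(ℝ)` and `f' ∈ L^q(ℝ)` for some `1 < r, q < ∞`, then `f` is bounded, vanishes at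
`±∞`, and `‖f‖_∞ ≤ C(r,q)(‖f‖_{L^r} + ‖f'‖_{L^q})`. -/
theorem statement17 (r q : ℝ) (hr : 1 < r) (hq : 1 < q) :
    ∃ C : ℝ, ∀ f : ℝ → ℝ, ContDiff ℝ 1 f →
      MemLp f (ENNReal.ofReal r) volume →
      MemLp (deriv f) (ENNReal.ofReal q) volume →
      Filter.Tendsto f Filter.atTop (nhds 0) ∧
      Filter.Tendsto f Filter.atBot (nhds 0) ∧
      ∀ x : ℝ, |f x| ≤ C * ((eLpNorm f (ENNReal.ofReal r) volume).toReal +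
        (eLpNorm (deriv f) (ENNReal.ofReal q) volume).toReal) := by
  have hr1 : 1 ≤ ENNReal.ofReal r := ENNReal.one_le_ofReal.mpr hr.le
  have hq1 : 1 ≤ ENNReal.ofReal q := ENNReal.one_le_ofReal.mpr hq.le
  refine ⟨1, fun f hf hfr hfq => ?_⟩
  have hbound (x : ℝ) := norm_le_toReal_eLpNorm_Ioc_add_toReal_eLpNorm_Ioc_deriv hf hr1 hq1
    (hfr.restrict (Ioc x (x + 1))) (hfq.restrict (Ioc x (x + 1)))
  have hlocal {g : ℝ → ℝ} {p : ℝ} (hp : 1 ≤ ENNReal.ofReal p)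
      (hg : MemLp g (ENNReal.ofReal p) volume) :=
    (ENNReal.tendsto_toReal ENNReal.zero_ne_top).comp <|
      tendsto_eLpNorm_restrict_Ioc_add_one_cocompact (one_pos.trans_le hp).ne'
        ENNReal.ofReal_ne_top hg
  have hlim : Tendsto f (cocompact ℝ) (𝓝 0) := by
    refine squeeze_zero_norm hbound ?_
    simpa using (hlocal hr1 hfr).add (hlocal hq1 hfq)
  refine ⟨hlim.mono_left atTop_le_cocompact, hlim.mono_left atBot_le_cocompact, fun x => ?_⟩
  rw [one_mul, ← Real.norm_eq_abs]
  exact (hbound x).trans (add_le_add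
    (ENNReal.toReal_mono hfr.eLpNorm_ne_top (eLpNorm_restrict_le _ _ _ _))
    (ENNReal.toReal_mono hfq.eLpNorm_ne_top (eLpNorm_restrict_le _ _ _ _)))
end
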